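/- arXiv:2512.02146 — 6 statements merged into one kernel-verified Lean document; each statement's English description precedes it below -/
import Mathlib

section
/- Let {a_n}_{n=1}^∞ be a strictly decreasing sequence of positive real numbers converging to 0 such that lim_{n→∞} a_{n+1}/a_n = 1. Then there exists a Lebesgue measurable set E ⊆ ℝ with positive Lebesgue measure such that for every λ ∈ ℝ with λ ≠ 0 and every t ∈ ℝ, the set {λ a_n + t : n ∈ ℕ} is not contained in E. -/
open MeasureTheory Filter Set
open scoped ENNReal

private lemma cross (d g t : ℝ) (hg : 0 < g) (hgd : g < d) (x : ℕ → ℝ)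
    (hstep : ∀ m, x m - 2*g < x (m+1) ∧ x (m+1) ≤ x m)
    (hlim : Tendsto x atTop (nhds t))
    (h0 : t + 2*d ≤ x 0) :
    ∃ j : ℤ, ∃ m, |x m - j * d| ≤ g := by
  classical
  have hd : 0 < d := hg.trans hgd
  set j : ℤ := ⌊t/d⌋ + 1 with hj
  have htd : t / d * d = t := div_mul_cancel₀ t hd.ne'
  have hb1 : t < (j:ℝ) * d := by
    have h := Int.lt_floor_add_one (t/d)
    have h2 : t / d < (j : ℝ) := by push_cast [hj]; linarith
    nlinarith
  have hb2 : (j:ℝ) * d ≤ t + d := by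
    have h := Int.floor_le (t/d)
    have h2 : (j:ℝ) ≤ t/d + 1 := by push_cast [hj]; linarith
    nlinarith
  have hex : ∃ m, x m ≤ (j:ℝ)*d + g := by
    obtain ⟨m, hm⟩ := (hlim.eventually (eventually_lt_nhds hb1)).exists
    exact ⟨m, by linarith⟩
  have hm : x (Nat.find hex) ≤ (j:ℝ)*d + g := Nat.find_spec hex
  have hm0 : Nat.find hex ≠ 0 := by
    intro h
    rw [h] at hm
    linarith
  have hm1 : ¬ x (Nat.find hex - 1) ≤ (j:ℝ)*d + g :=
    Nat.find_min hex (Nat.pred_lt hm0)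
  push_neg at hm1
  have hs := hstep (Nat.find hex - 1)
  have heq : Nat.find hex - 1 + 1 = Nat.find hex := Nat.succ_pred_eq_of_ne_zero hm0
  rw [heq] at hs
  exact ⟨j, Nat.find hex, abs_le.mpr ⟨by linarith [hs.1], by linarith⟩⟩

set_option maxHeartbeats 1600000 in
/-- **Eigen–Falconer theorem.**
If `{a_n}` is a strictly decreasing sequence of positive reals converging to `0` with
`a_{n+1}/a_n → 1`, then there is a measurable set `E ⊆ ℝ` of positive Lebesgue measure
containing no similar copy `{λ a_n + t}` of the sequence. -/
theorem stmt1 (a : ℕ → ℝ) (hpos : ∀ n, 0 < a n) (hdec : StrictAnti a)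
    (hlim : Tendsto a atTop (nhds 0))
    (hratio : Tendsto (fun n => a (n + 1) / a n) atTop (nhds 1)) :
    ∃ E : Set ℝ, MeasurableSet E ∧ 0 < volume E ∧
      ∀ (l t : ℝ), l ≠ 0 → ¬ ((fun s => l * s + t) '' Set.range a ⊆ E) := by
  classical
  -- Step 1: from the ratio condition, get thresholds N k controlling step sizes
  have hN0 : ∀ k : ℕ, ∃ N, ∀ n, N ≤ n → a n - a (n+1) < (2:ℝ)⁻¹^(k+5) * a n := by
    intro k
    have hε : (0:ℝ) < (2:ℝ)⁻¹^(k+5) := by positivity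
    have h1 : (1:ℝ) - (2:ℝ)⁻¹^(k+5) < 1 := by linarith
    have h2 := hratio.eventually (eventually_gt_nhds h1)
    rw [eventually_atTop] at h2
    obtain ⟨N, hN⟩ := h2
    refine ⟨N, fun n hn => ?_⟩
    have h3 : (1 - (2:ℝ)⁻¹^(k+5)) * a n < a (n+1) :=
      (lt_div_iff₀ (hpos n)).mp (hN n hn)
    nlinarith
  choose N hN using hN0
  -- Step 2: scales
  set δ : ℕ → ℝ := fun k => min ((2:ℝ)⁻¹^(k+5)) ((2:ℝ)⁻¹^k * a (N k) / 4) with hδdef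
  have hδpos : ∀ k, 0 < δ k := by
    intro k
    have := hpos (N k)
    exact lt_min (by positivity) (by positivity)
  have hδ1 : ∀ k, δ k ≤ (2:ℝ)⁻¹^(k+5) := fun k => min_le_left _ _
  have hδ2 : ∀ k, 4 * δ k ≤ (2:ℝ)⁻¹^k * a (N k) := by
    intro k
    have h : δ k ≤ (2:ℝ)⁻¹^k * a (N k) / 4 := min_le_right _ _
    linarith
  set g : ℕ → ℝ := fun k => (2:ℝ)⁻¹^(k+4) * δ k with hgdef
  have hgpos : ∀ k, 0 < g k := by
    intro k; have := hδpos k; positivity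
  have hgδ : ∀ k, g k < δ k := by
    intro k
    have h1 : (2:ℝ)⁻¹^(k+4) < 1 := by
      apply pow_lt_one₀ (by norm_num) (by norm_num) (by omega)
    have := hδpos k
    calc g k = (2:ℝ)⁻¹^(k+4) * δ k := rfl
    _ < 1 * δ k := by nlinarith
    _ = δ k := one_mul _
  set G : ℕ → Set ℝ :=
    fun k => ⋃ j : ℤ, Icc ((j:ℝ) * δ k - g k) ((j:ℝ) * δ k + g k) with hGdef
  refine ⟨Icc 0 1 \ ⋃ k, G k, measurableSet_Icc.diff
    (MeasurableSet.iUnion fun k => MeasurableSet.iUnion fun _ => measurableSet_Icc),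
    ?_, ?_⟩
  · -- positive measure
    rw [pos_iff_ne_zero]
    intro hE0
    set M : ℕ → ℕ := fun k => (⌊1 / δ k⌋).toNat + 2 with hM
    have hcover : ∀ k, volume (G k ∩ Icc 0 1) ≤ ENNReal.ofReal ((2:ℝ)⁻¹^(k+2)) := by
      intro k
      have hδp := hδpos k
      have hgp := hgpos k
      have hgd := hgδ k
      have hsub2 : G k ∩ Icc 0 1 ⊆
          ⋃ i ∈ Finset.range (M k), Icc ((i:ℝ) * δ k - g k) ((i:ℝ) * δ k + g k) := by
        rintro y ⟨hyG, hy0, hy1⟩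
        obtain ⟨j, hj⟩ := mem_iUnion.mp hyG
        rw [mem_Icc] at hj
        have hj0 : 0 ≤ j := by
          by_contra h
          push_neg at h
          have h1 : (j:ℝ) ≤ -1 := by exact_mod_cast Int.le_sub_one_of_lt h
          nlinarith [hj.2]
        have hjle : (j:ℝ) * δ k ≤ 1 + δ k := by nlinarith [hj.1]
        have hjM : j.toNat < M k := by
          have h2 : j ≤ ⌊1/δ k⌋ + 1 := by
            have h3 : ((j - 1 : ℤ):ℝ) ≤ 1 / δ k := by
              push_cast
              rw [le_div_iff₀ hδp]
              nlinarith
            have h4 : j - 1 ≤ ⌊1/δ k⌋ := Int.le_floor.mpr h3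
            omega
          have h5 : 0 ≤ ⌊1/δ k⌋ := Int.floor_nonneg.mpr (by positivity)
          have h7 : j.toNat ≤ ⌊1/δ k⌋.toNat + 1 := by omega
          have h8 : M k = ⌊1/δ k⌋.toNat + 2 := rfl
          omega
        refine mem_biUnion (Finset.mem_range.mpr hjM) ?_
        have hcast : ((j.toNat : ℕ) : ℝ) = (j:ℝ) := by exact_mod_cast Int.toNat_of_nonneg hj0
        rw [mem_Icc, hcast]
        exact ⟨hj.1, hj.2⟩
      have hM1 : ((M k : ℕ) : ℝ) ≤ 1/δ k + 2 := by
        have h5 : 0 ≤ ⌊1/δ k⌋ := Int.floor_nonneg.mpr (by positivity)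
        have h6 : ((⌊1/δ k⌋.toNat : ℕ) : ℝ) ≤ 1/δ k := by
          have := Int.floor_le (1/δ k)
          have hc : ((⌊1/δ k⌋.toNat : ℕ) : ℝ) = ((⌊1/δ k⌋ : ℤ) : ℝ) := by
            exact_mod_cast Int.toNat_of_nonneg h5
          linarith [hc ▸ this]
        rw [hM]
        push_cast
        push_cast at h6
        linarith
      calc volume (G k ∩ Icc 0 1)
          ≤ volume (⋃ i ∈ Finset.range (M k), Icc ((i:ℝ) * δ k - g k) ((i:ℝ) * δ k + g k)) :=
            measure_mono hsub2
        _ ≤ ∑ i ∈ Finset.range (M k),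
              volume (Icc ((i:ℝ) * δ k - g k) ((i:ℝ) * δ k + g k)) :=
            measure_biUnion_finset_le _ _
        _ = ∑ i ∈ Finset.range (M k), ENNReal.ofReal (2 * g k) := by
            refine Finset.sum_congr rfl fun i _ => ?_
            rw [Real.volume_Icc]
            congr 1
            ring
        _ = (M k : ℝ≥0∞) * ENNReal.ofReal (2 * g k) := by
            rw [Finset.sum_const, Finset.card_range, nsmul_eq_mul]
        _ = ENNReal.ofReal ((M k : ℝ) * (2 * g k)) := by
            rw [← ENNReal.ofReal_natCast (M k), ← ENNReal.ofReal_mul (by positivity)]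
        _ ≤ ENNReal.ofReal ((2:ℝ)⁻¹^(k+2)) := by
            apply ENNReal.ofReal_le_ofReal
            -- (M k) * 2g ≤ (1/δ + 2)·2g = 2⁻¹^(k+3) + 2·2⁻¹^(k+2)·δ ≤ 2⁻¹^(k+2)
            have e1 : (1/δ k) * (2 * g k) = 2 * (2:ℝ)⁻¹^(k+4) := by
              have : g k = (2:ℝ)⁻¹^(k+4) * δ k := rfl
              rw [this]
              field_simp
            have e2 : (0:ℝ) ≤ 2 * g k := by linarith
            have e3 : ((M k : ℕ) : ℝ) * (2 * g k) ≤ (1/δ k + 2) * (2 * g k) := by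
              nlinarith
            have e4 : δ k ≤ (2:ℝ)⁻¹^(k+5) := hδ1 k
            have e5 : (2:ℝ)⁻¹^(k+5) ≤ (2:ℝ)⁻¹^5 := by
              apply pow_le_pow_of_le_one (by norm_num) (by norm_num) (by omega)
            have e6 : g k ≤ (2:ℝ)⁻¹^(k+4) * (2:ℝ)⁻¹^(k+5) := by
              have : g k = (2:ℝ)⁻¹^(k+4) * δ k := rfl
              rw [this]
              have : (0:ℝ) < (2:ℝ)⁻¹^(k+4) := by positivity
              nlinarith
            have e7 : (2:ℝ)⁻¹^(k+4) * (2:ℝ)⁻¹^(k+5) ≤ (2:ℝ)⁻¹^(k+4) * (2:ℝ)⁻¹^5 := by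
              have : (0:ℝ) < (2:ℝ)⁻¹^(k+4) := by positivity
              nlinarith
            have e8 : (2:ℝ)⁻¹^(k+5) = (2:ℝ)⁻¹^(k+4) * 2⁻¹ := pow_succ _ _
            have e9 : (2:ℝ)⁻¹^(k+4) = (2:ℝ)⁻¹^(k+3) * 2⁻¹ := pow_succ _ _
            have e10 : (2:ℝ)⁻¹^(k+3) = (2:ℝ)⁻¹^(k+2) * 2⁻¹ := pow_succ _ _
            nlinarith [e1, e3, e6, e7]
    have hsub3 : Icc (0:ℝ) 1 ⊆ (Icc 0 1 \ ⋃ k, G k) ∪ ⋃ k, (G k ∩ Icc 0 1) := by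
      intro y hy
      by_cases h : y ∈ ⋃ k, G k
      · right
        obtain ⟨k, hk⟩ := mem_iUnion.mp h
        exact mem_iUnion.mpr ⟨k, hk, hy⟩
      · left
        exact ⟨hy, h⟩
    have hone : (1:ℝ≥0∞) ≤ volume (Icc (0:ℝ) 1 \ ⋃ k, G k)
        + ∑' k : ℕ, ENNReal.ofReal ((2:ℝ)⁻¹^(k+2)) := by
      calc (1:ℝ≥0∞) = volume (Icc (0:ℝ) 1) := by simp [Real.volume_Icc]
        _ ≤ volume ((Icc (0:ℝ) 1 \ ⋃ k, G k) ∪ ⋃ k, (G k ∩ Icc 0 1)) := measure_mono hsub3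
        _ ≤ volume (Icc (0:ℝ) 1 \ ⋃ k, G k) + volume (⋃ k, (G k ∩ Icc 0 1)) :=
            measure_union_le _ _
        _ ≤ volume (Icc (0:ℝ) 1 \ ⋃ k, G k) + ∑' k : ℕ, volume (G k ∩ Icc 0 1) := by
            gcongr
            exact measure_iUnion_le _
        _ ≤ _ := add_le_add le_rfl (ENNReal.tsum_le_tsum hcover)
    rw [hE0, zero_add] at hone
    have htsum : ∑' k : ℕ, ENNReal.ofReal ((2:ℝ)⁻¹^(k+2)) ≤ 2⁻¹ := by
      have heq : ∀ k : ℕ, ENNReal.ofReal ((2:ℝ)⁻¹^(k+2)) = (2⁻¹ : ℝ≥0∞)^k * (2⁻¹)^2 := by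
        intro k
        rw [ENNReal.ofReal_pow (by norm_num)]
        rw [show ENNReal.ofReal (2:ℝ)⁻¹ = (2:ℝ≥0∞)⁻¹ by
          rw [ENNReal.ofReal_inv_of_pos (by norm_num)]
          norm_num]
        rw [pow_add]
      simp_rw [heq]
      rw [ENNReal.tsum_mul_right, ENNReal.tsum_geometric]
      have h12 : (1:ℝ≥0∞) - 2⁻¹ = 2⁻¹ := ENNReal.one_sub_inv_two
      rw [h12]
      rw [inv_inv]
      rw [pow_two]
      rw [← mul_assoc]
      rw [ENNReal.mul_inv_cancel (by norm_num) (by norm_num), one_mul]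
    have : (1:ℝ≥0∞) ≤ 2⁻¹ := le_trans hone htsum
    have h2 : (2⁻¹:ℝ≥0∞) < 1 := by
      rw [ENNReal.inv_lt_one]
      norm_num
    exact absurd this (not_le.mpr h2)
  · intro l t hlne hsub
    have hl : 0 < |l| := abs_pos.mpr hlne
    obtain ⟨k, hk⟩ := exists_pow_lt_of_lt_one hl (by norm_num : (2:ℝ)⁻¹ < 1)
    have hεk : (0:ℝ) < (2:ℝ)⁻¹^(k+5) := by positivity
    have hεle : (2:ℝ)⁻¹^(k+5) ≤ (2:ℝ)⁻¹^5 :=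
      pow_le_pow_of_le_one (by norm_num) (by norm_num) (by omega)
    have hLk : 4 * δ k ≤ |l| * a (N k) := by
      have h1 := hδ2 k
      have h2 := hpos (N k)
      nlinarith [hk]
    have hex : ∃ n, N k ≤ n ∧ |l| * a n ≤ 4 * δ k := by
      have h0 : Tendsto (fun n => |l| * a n) atTop (nhds 0) := by
        simpa using hlim.const_mul |l|
      have h1 := h0.eventually (eventually_lt_nhds
        (show (0:ℝ) < 4 * δ k by have := hδpos k; linarith))
      rw [eventually_atTop] at h1
      obtain ⟨N', hN'⟩ := h1
      exact ⟨max (N k) N', le_max_left _ _, (hN' _ (le_max_right _ _)).le⟩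
    obtain ⟨n1, hspec, hminimal⟩ :
        ∃ n, (N k ≤ n ∧ |l| * a n ≤ 4 * δ k) ∧
          ∀ m, m < n → ¬(N k ≤ m ∧ |l| * a m ≤ 4 * δ k) :=
      ⟨Nat.find hex, Nat.find_spec hex, fun m hm => Nat.find_min hex hm⟩
    have h2δ : 2 * δ k ≤ |l| * a n1 := by
      rcases eq_or_lt_of_le hspec.1 with he | hlt
      · rw [← he]
        have := hδpos k
        linarith [hLk]
      · have hn1 : n1 ≠ 0 := by omega
        have hp : n1 - 1 < n1 := Nat.pred_lt hn1
        have hmin := hminimal (n1 - 1) hp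
        have hge : N k ≤ n1 - 1 := by omega
        have h4 : 4 * δ k < |l| * a (n1 - 1) := by
          by_contra h
          push_neg at h
          exact hmin ⟨hge, h⟩
        have hstepb := hN k (n1-1) hge
        have heq : n1 - 1 + 1 = n1 := by omega
        rw [heq] at hstepb
        have hc := mul_lt_mul_of_pos_left hstepb hl
        have hpa := hpos (n1-1)
        nlinarith [hc, h4, mul_le_mul_of_nonneg_right hεle (mul_nonneg hl.le hpa.le)]
    set t' := if 0 < l then t else -t with ht'def
    have hxstep : ∀ m : ℕ, (|l| * a (n1 + m) + t') - 2 * g k < (|l| * a (n1 + (m+1)) + t')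
        ∧ (|l| * a (n1 + (m+1)) + t') ≤ (|l| * a (n1 + m) + t') := by
      intro m
      have hge : N k ≤ n1 + m := le_trans hspec.1 (Nat.le_add_right _ _)
      have heq : n1 + (m+1) = (n1 + m) + 1 := by omega
      rw [heq]
      have hd := hN k (n1+m) hge
      have hmono : a (n1+m) ≤ a n1 := hdec.antitone (Nat.le_add_right _ _)
      have h4' : |l| * a (n1+m) ≤ 4 * δ k :=
        le_trans (mul_le_mul_of_nonneg_left hmono hl.le) hspec.2
      have hc := mul_lt_mul_of_pos_left hd hl
      have hpa := hpos (n1+m)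
      have hb := mul_le_mul_of_nonneg_left h4' hεk.le
      have hgk : g k = (2:ℝ)⁻¹^(k+4) * δ k := rfl
      have e8 : (2:ℝ)⁻¹^(k+5) = (2:ℝ)⁻¹^(k+4) * 2⁻¹ := pow_succ _ _
      constructor
      · nlinarith [hc, hb]
      · have hlt := hdec (Nat.lt_succ_self (n1+m))
        nlinarith [mul_le_mul_of_nonneg_left hlt.le hl.le]
    have hxlim : Tendsto (fun m => |l| * a (n1 + m) + t') atTop (nhds t') := by
      have h1 : Tendsto (fun m => a (n1 + m)) atTop (nhds 0) := by
        have h2 := hlim.comp (tendsto_add_atTop_nat n1)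
        exact h2.congr (fun m => by rw [Function.comp_apply, Nat.add_comm])
      have h3 := (h1.const_mul (|l|)).add_const t'
      simpa using h3
    have hx0 : t' + 2 * δ k ≤ |l| * a (n1 + 0) + t' := by
      have hz : n1 + 0 = n1 := rfl
      rw [hz]
      linarith
    obtain ⟨j, m, hjm⟩ := cross (δ k) (g k) t' (hgpos k) (hgδ k)
      (fun m => |l| * a (n1 + m) + t') hxstep hxlim hx0
    rw [abs_le] at hjm
    have hmem := hsub ⟨a (n1 + m), mem_range_self _, rfl⟩
    have hnotG : l * a (n1 + m) + t ∉ G k := fun h => hmem.2 (mem_iUnion.mpr ⟨k, h⟩)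
    apply hnotG
    have hjm1 := hjm.1
    have hjm2 := hjm.2
    rcases hlne.lt_or_gt with hneg | hposl
    · have habs : |l| = -l := abs_of_neg hneg
      have ht'e : t' = -t := by rw [ht'def, if_neg (not_lt.mpr hneg.le)]
      rw [habs, ht'e] at hjm1 hjm2
      refine mem_iUnion.mpr ⟨-j, ?_⟩
      rw [mem_Icc]
      push_cast
      constructor <;> linarith
    · have habs : |l| = l := abs_of_pos hposl
      have ht'e : t' = t := by rw [ht'def, if_pos hposl]
      rw [habs, ht'e] at hjm1 hjm2
      refine mem_iUnion.mpr ⟨j, ?_⟩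
      rw [mem_Icc]
      constructor <;> linarith
end

section
/- Fix d ≥ 2. Suppose that for every infinite set A ⊆ ℝ^d there exists a measurable set E ⊆ ℝ^d with μ_d(E) > 0 such that for every invertible linear map T : ℝ^d → ℝ^d and every x ∈ ℝ^d, TA + x is not contained in E. Then for every infinite set A ⊆ ℝ there exists a measurable set E ⊆ ℝ with μ_1(E) > 0 such that for every λ ∈ ℝ with λ ≠ 0 and every t ∈ ℝ, λA + t is not contained in E. -/
open MeasureTheory Filter Set

/-- The generalized Erdős similarity conjecture in `ℝ^d` for some `d ≥ 2` implies the
original Erdős similarity conjecture in `ℝ`. -/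
theorem stmt3 (d : ℕ) (hd : 2 ≤ d)
    (H : ∀ A : Set (EuclideanSpace ℝ (Fin d)), A.Infinite →
      ∃ E : Set (EuclideanSpace ℝ (Fin d)), MeasurableSet E ∧ 0 < volume E ∧
        ∀ (T : EuclideanSpace ℝ (Fin d) ≃ₗ[ℝ] EuclideanSpace ℝ (Fin d))
          (v : EuclideanSpace ℝ (Fin d)),
          ¬ ((fun a => T a + v) '' A ⊆ E)) :
    ∀ A : Set ℝ, A.Infinite →
      ∃ E : Set ℝ, MeasurableSet E ∧ 0 < volume E ∧
        ∀ (l t : ℝ), l ≠ 0 → ¬ ((fun a => l * a + t) '' A ⊆ E) := by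
  obtain ⟨n, rfl⟩ : ∃ n, d = n + 1 := ⟨d - 1, by omega⟩
  intro A hA
  -- embed A into ℝ^d along the first coordinate
  set ι : ℝ → EuclideanSpace ℝ (Fin (n + 1)) := fun a => EuclideanSpace.single 0 a with hι
  have hιinj : Function.Injective ι := by
    intro a b hab
    have := congrArg (fun v => v 0) hab
    simpa [hι, EuclideanSpace.single_apply] using this
  obtain ⟨E', hE'meas, hE'pos, hE'⟩ := H (ι '' A) (hA.image hιinj.injOn)
  -- measure-preserving identifications
  have h1 := (EuclideanSpace.volume_preserving_symm_measurableEquiv_toLp (Fin (n + 1))).symm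
  have h2 := (volume_preserving_piFinSuccAbove (fun _ : Fin (n + 1) => ℝ) 0).symm
  set Φ : ℝ × (Fin n → ℝ) → EuclideanSpace ℝ (Fin (n + 1)) :=
    fun p => (MeasurableEquiv.toLp 2 (Fin (n + 1) → ℝ))
      ((MeasurableEquiv.piFinSuccAbove (fun _ : Fin (n + 1) => ℝ) 0).symm p) with hΦdef
  have hΦ : MeasurePreserving Φ volume volume := h1.comp h2
  have hΦcoord : ∀ (x : ℝ) (y : Fin n → ℝ) (j : Fin (n + 1)),
      Φ (x, y) j = (Fin.cons x y : ∀ _ : Fin (n + 1), ℝ) j := by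
    intro x y j
    simp only [hΦdef, MeasurableEquiv.piFinSuccAbove_symm_apply,
      MeasurableEquiv.toLp_apply, PiLp.toLp_apply,
      Fin.insertNthEquiv_apply, Fin.insertNth_zero]
    congr
  set S : Set (ℝ × (Fin n → ℝ)) := Φ ⁻¹' E' with hSdef
  have hSmeas : MeasurableSet S := hΦ.measurable hE'meas
  have hSvol : volume S = volume E' := hΦ.measure_preimage hE'meas.nullMeasurableSet
  -- Fubini: find a slice with positive measure
  have hswap : (volume : Measure ((Fin n → ℝ) × ℝ)) (Prod.swap ⁻¹' S) = volume S := by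
    rw [Measure.volume_eq_prod, Measure.volume_eq_prod]
    exact MeasureTheory.Measure.measurePreserving_swap.measure_preimage hSmeas.nullMeasurableSet
  have hnull : ¬ ((volume : Measure ((Fin n → ℝ) × ℝ)) (Prod.swap ⁻¹' S) = 0) := by
    rw [hswap, hSvol]
    exact hE'pos.ne'
  have hswapmeas : MeasurableSet (Prod.swap ⁻¹' S : Set ((Fin n → ℝ) × ℝ)) :=
    hSmeas.preimage measurable_swap
  obtain ⟨y, hy⟩ : ∃ y : Fin n → ℝ, volume {x : ℝ | (x, y) ∈ S} ≠ 0 := by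
    by_contra hcon
    push_neg at hcon
    apply hnull
    rw [Measure.volume_eq_prod, Measure.measure_prod_null hswapmeas]
    filter_upwards with y
    exact hcon y
  refine ⟨{x : ℝ | (x, y) ∈ S}, hSmeas.preimage (measurable_id.prodMk measurable_const),
    pos_iff_ne_zero.mpr hy, ?_⟩
  intro l t hl hsub
  -- build the affine copy in ℝ^d
  set T : EuclideanSpace ℝ (Fin (n + 1)) ≃ₗ[ℝ] EuclideanSpace ℝ (Fin (n + 1)) :=
    DistribMulAction.toLinearEquiv ℝ _ (Units.mk0 l hl) with hT
  apply hE' T (Φ (t, y))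
  rintro _ ⟨_, ⟨a, ha, rfl⟩, rfl⟩
  have hkey : T (ι a) + Φ (t, y) = Φ (l * a + t, y) := by
    have hTa : T (ι a) = l • ι a := by
      simp [hT, DistribMulAction.toLinearEquiv_apply, Units.smul_def]
    ext j
    have h1 : (T (ι a) + Φ (t, y)) j = T (ι a) j + Φ (t, y) j := rfl
    rw [h1, hTa, hΦcoord, hΦcoord]
    have h2 : (l • ι a) j = l * (ι a) j := rfl
    rw [h2]
    rcases Fin.eq_zero_or_eq_succ j with rfl | ⟨k, rfl⟩
    · simp [hι, EuclideanSpace.single_apply]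
    · simp [hι, EuclideanSpace.single_apply, Fin.succ_ne_zero]
  show T (ι a) + Φ (t, y) ∈ E'
  rw [hkey]
  exact hsub ⟨a, ha, rfl⟩
end

section
/- Let d ≥ 1 and let A = {x_n}_{n=1}^∞ be a sequence of nonzero vectors in ℝ^d such that the sequence {‖x_n‖}_{n=1}^∞ is strictly decreasing. Suppose there exists a sequence {A_n}_{n=1}^∞ of finite subsets of {x_m : m ∈ ℕ}, each with at least two elements, such that #A_n → ∞ and (−log δ(A_n))/#A_n → 0 as n → ∞. Then limsup_{n→∞} ‖x_{n+1}‖/‖x_n‖ = 1. -/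
open MeasureTheory Filter Set

/-- The quantity `δ(F) = min{‖x−y‖ : x ≠ y ∈ F} / max{‖z‖ : z ∈ F}` for a finite set
`F ⊆ ℝ^d` with at least two elements. -/
noncomputable def delta {d : ℕ} (F : Set (EuclideanSpace ℝ (Fin d))) : ℝ :=
  sInf {s : ℝ | ∃ x ∈ F, ∃ y ∈ F, x ≠ y ∧ ‖x - y‖ = s} /
    sSup {s : ℝ | ∃ z ∈ F, ‖z‖ = s}

/-- If `{x_n}` is a sequence of nonzero vectors with `‖x_n‖` strictly decreasing which
admits finite subsets `A_n ⊆ {x_m}` with `#A_n → ∞` and `(−log δ(A_n))/#A_n → 0`,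
then `limsup ‖x_{n+1}‖/‖x_n‖ = 1`. -/
theorem stmt4 (d : ℕ) (hd : 1 ≤ d) (x : ℕ → EuclideanSpace ℝ (Fin d))
    (hne : ∀ n, x n ≠ 0) (hdec : StrictAnti (fun n => ‖x n‖))
    (An : ℕ → Set (EuclideanSpace ℝ (Fin d)))
    (hfin : ∀ n, (An n).Finite) (hsub : ∀ n, An n ⊆ Set.range x)
    (hcard2 : ∀ n, 2 ≤ (An n).ncard)
    (hcard : Tendsto (fun n => (An n).ncard) atTop atTop)
    (hlog : Tendsto (fun n => -Real.log (delta (An n)) / ((An n).ncard : ℝ))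
      atTop (nhds 0)) :
    Filter.limsup (fun n => ‖x (n + 1)‖ / ‖x n‖) atTop = 1 := by
  classical
  have hpos : ∀ n, 0 < ‖x n‖ := fun n => norm_pos_iff.mpr (hne n)
  set r : ℕ → ℝ := fun n => ‖x (n + 1)‖ / ‖x n‖ with hrdef
  have hr0 : ∀ n, 0 ≤ r n := fun n => div_nonneg (norm_nonneg _) (norm_nonneg _)
  have hr1 : ∀ n, r n < 1 := by
    intro n
    rw [hrdef]
    simp only
    rw [div_lt_one (hpos n)]
    exact hdec (Nat.lt_succ_self n)
  have hbdd : IsBoundedUnder (· ≤ ·) atTop r :=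
    isBoundedUnder_of ⟨1, fun n => (hr1 n).le⟩
  have hcobdd : IsCoboundedUnder (· ≤ ·) atTop r :=
    isCoboundedUnder_le_of_le atTop hr0
  have hle : limsup r atTop ≤ 1 :=
    limsup_le_of_le hcobdd (Eventually.of_forall fun n => (hr1 n).le)
  by_contra hne1
  have hlt : limsup r atTop < 1 := lt_of_le_of_ne hle hne1
  set L := limsup r atTop with hL
  set a : ℝ := (max L 0 + 1) / 2 with ha
  have hmax1 : max L 0 < 1 := max_lt hlt one_pos
  have ha0 : 0 < a := by
    have : (0:ℝ) ≤ max L 0 := le_max_right _ _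
    rw [ha]; linarith
  have ha1 : a < 1 := by rw [ha]; linarith
  have hLa : L < a := by
    have : L ≤ max L 0 := le_max_left _ _
    rw [ha]; linarith
  have hev : ∀ᶠ n in atTop, r n < a := eventually_lt_of_limsup_lt hLa hbdd
  obtain ⟨N, hN⟩ := eventually_atTop.mp hev
  -- geometric decay past N
  have hgeo : ∀ l, N ≤ l → ∀ m, l ≤ m → ‖x m‖ ≤ a ^ (m - l) * ‖x l‖ := by
    intro l hNl m hlm
    induction m, hlm using Nat.le_induction with
    | base => simp
    | succ m hlm ih =>
      have hra : r m < a := hN m (hNl.trans hlm)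
      have hxm : ‖x (m + 1)‖ = r m * ‖x m‖ := by
        rw [hrdef]
        exact (div_mul_cancel₀ _ (hpos m).ne').symm
      have h1 : ‖x (m + 1)‖ ≤ a * ‖x m‖ := by
        rw [hxm]
        exact mul_le_mul_of_nonneg_right hra.le (norm_nonneg _)
      have h2 : a * ‖x m‖ ≤ a * (a ^ (m - l) * ‖x l‖) :=
        mul_le_mul_of_nonneg_left ih ha0.le
      have hexp : m + 1 - l = (m - l) + 1 := by omega
      calc ‖x (m + 1)‖ ≤ a * (a ^ (m - l) * ‖x l‖) := h1.trans h2
        _ = a ^ (m + 1 - l) * ‖x l‖ := by rw [hexp, pow_succ]; ring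
  have hxinj : Function.Injective x := by
    intro i j hij
    by_contra hij'
    have : ‖x i‖ = ‖x j‖ := by rw [hij]
    exact hij' (hdec.injective (by simpa using this))
  -- key bound on delta
  have key : ∀ n, N + 2 ≤ (An n).ncard →
      0 < delta (An n) ∧ delta (An n) ≤ 2 * a ^ ((An n).ncard - 2 - N) := by
    intro n hk
    set A := An n with hA
    set k := (An n).ncard with hkdef
    set F : Finset (EuclideanSpace ℝ (Fin d)) := (hfin n).toFinset with hF
    have hFA : ∀ y, y ∈ F ↔ y ∈ A := fun y => (hfin n).mem_toFinset
    have hFcard : F.card = k := by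
      rw [hF, hkdef, Set.ncard_eq_toFinset_card _ (hfin n)]
    set I : Finset ℕ := F.preimage x hxinj.injOn with hI
    have hImem : ∀ m, m ∈ I ↔ x m ∈ A := by
      intro m; rw [hI, Finset.mem_preimage]; exact hFA _
    have hIcard : I.card = k := by
      have himg : I.image x = F := by
        rw [hI, Finset.image_preimage]
        apply Finset.filter_true_of_mem
        intro y hy
        exact hsub n ((hFA y).mp hy)
      have := Finset.card_image_of_injective I hxinj
      rw [himg, hFcard] at this
      exact this.symm
    have hIne : I.Nonempty := Finset.card_pos.mp (by omega)
    set a' := I.max' hIne with ha'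
    have ha'I : a' ∈ I := I.max'_mem hIne
    set J := I.erase a' with hJ
    have hJcard : J.card = k - 1 := by rw [hJ, Finset.card_erase_of_mem ha'I, hIcard]
    have hJne : J.Nonempty := Finset.card_pos.mp (by omega)
    set b := J.max' hJne with hb
    have hbJ : b ∈ J := J.max'_mem hJne
    have hbI : b ∈ I := Finset.mem_of_mem_erase hbJ
    have hba' : b ≠ a' := Finset.ne_of_mem_erase hbJ
    set m₁ := I.min' hIne with hm₁
    have hm₁I : m₁ ∈ I := I.min'_mem hIne
    -- J ⊆ Icc m₁ b
    have hJsub : J ⊆ Finset.Icc m₁ b := by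
      intro c hc
      rw [Finset.mem_Icc]
      exact ⟨I.min'_le c (Finset.mem_of_mem_erase hc), J.le_max' c hc⟩
    have hcard_b : m₁ + k ≤ b + 2 := by
      have := Finset.card_le_card hJsub
      rw [hJcard, Nat.card_Icc] at this
      have hm₁b : m₁ ≤ b := I.min'_le b hbI
      omega
    -- the sets in the definition of delta
    set S := {s : ℝ | ∃ u ∈ A, ∃ v ∈ A, u ≠ v ∧ ‖u - v‖ = s} with hS
    set T := {s : ℝ | ∃ z ∈ A, ‖z‖ = s} with hT
    have hSfin : S.Finite := by
      apply Set.Finite.subset (((hfin n).prod (hfin n)).image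
        (fun p : EuclideanSpace ℝ (Fin d) × EuclideanSpace ℝ (Fin d) => ‖p.1 - p.2‖))
      rintro s ⟨u, hu, v, hv, _, rfl⟩
      exact ⟨(u, v), ⟨hu, hv⟩, rfl⟩
    have hTfin : T.Finite := by
      apply Set.Finite.subset ((hfin n).image (fun z => ‖z‖))
      rintro s ⟨z, hz, rfl⟩
      exact ⟨z, hz, rfl⟩
    have hxab : x a' ≠ x b := fun h => hba' (hxinj h).symm
    have hSne : S.Nonempty :=
      ⟨‖x a' - x b‖, x a', (hImem a').mp ha'I, x b, (hImem b).mp hbI, hxab, rfl⟩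
    have hTne : T.Nonempty := ⟨‖x m₁‖, x m₁, (hImem m₁).mp hm₁I, rfl⟩
    have hSbdd : BddBelow S := by
      refine ⟨0, ?_⟩
      rintro s ⟨u, _, v, _, _, rfl⟩
      exact norm_nonneg _
    have hSpos : 0 < sInf S := by
      obtain ⟨u, _, v, _, huv, hs⟩ := hSne.csInf_mem hSfin
      rw [← hs]
      exact norm_pos_iff.mpr (sub_ne_zero.mpr huv)
    have hT1 : ‖x m₁‖ ≤ sSup T :=
      le_csSup hTfin.bddAbove ⟨x m₁, (hImem m₁).mp hm₁I, rfl⟩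
    have hTpos : 0 < sSup T := lt_of_lt_of_le (hpos m₁) hT1
    have hdelta : delta A = sInf S / sSup T := rfl
    constructor
    · rw [hdelta]; exact div_pos hSpos hTpos
    -- upper bound
    obtain ⟨N', hm₁N', hNN', hN'b, hexp⟩ :
        ∃ N', m₁ ≤ N' ∧ N ≤ N' ∧ N' ≤ b ∧ k - 2 - N ≤ b - N' := by
      rcases le_total m₁ N with h | h
      · exact ⟨N, h, le_rfl, by omega, by omega⟩
      · exact ⟨m₁, le_rfl, h, by omega, by omega⟩
    have hxb : ‖x b‖ ≤ a ^ (b - N') * ‖x N'‖ := hgeo N' hNN' b hN'b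
    have hpow : a ^ (b - N') ≤ a ^ (k - 2 - N) :=
      pow_le_pow_of_le_one ha0.le ha1.le hexp
    have hN'm₁ : ‖x N'‖ ≤ ‖x m₁‖ := hdec.antitone hm₁N'
    have hxb2 : ‖x b‖ ≤ a ^ (k - 2 - N) * ‖x m₁‖ := by
      calc ‖x b‖ ≤ a ^ (b - N') * ‖x N'‖ := hxb
        _ ≤ a ^ (k - 2 - N) * ‖x m₁‖ := by
          apply mul_le_mul hpow hN'm₁ (norm_nonneg _) (pow_nonneg ha0.le _)
    have hxa'b : ‖x a' - x b‖ ≤ 2 * (a ^ (k - 2 - N) * ‖x m₁‖) := by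
      have hba'' : b < a' := lt_of_le_of_ne (I.le_max' b hbI) hba'
      have h1 : ‖x a'‖ ≤ ‖x b‖ := hdec.antitone hba''.le
      calc ‖x a' - x b‖ ≤ ‖x a'‖ + ‖x b‖ := norm_sub_le _ _
        _ ≤ 2 * ‖x b‖ := by linarith
        _ ≤ 2 * (a ^ (k - 2 - N) * ‖x m₁‖) := by linarith
    have hS2 : sInf S ≤ ‖x a' - x b‖ :=
      csInf_le hSbdd ⟨x a', (hImem a').mp ha'I, x b, (hImem b).mp hbI, hxab, rfl⟩
    rw [hdelta]
    calc sInf S / sSup T ≤ (2 * (a ^ (k - 2 - N) * ‖x m₁‖)) / ‖x m₁‖ := by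
          apply div_le_div₀ (by positivity) (hS2.trans hxa'b) (hpos m₁) hT1
      _ = 2 * a ^ (k - 2 - N) := by
          rw [mul_div_assoc, mul_div_assoc, div_self (hpos m₁).ne', mul_one]
  -- the contradiction via logs
  set E : ℝ := -Real.log a with hE
  have hEpos : 0 < E := by
    rw [hE]
    have := Real.log_neg ha0 ha1
    linarith
  set k : ℕ → ℕ := fun n => (An n).ncard with hk
  set h : ℕ → ℝ := fun n => E - ((N + 2) * E + Real.log 2) / (k n : ℝ) with hhdef
  have hk_ev : ∀ᶠ n in atTop, N + 2 ≤ k n := hcard.eventually_ge_atTop (N + 2)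
  have hgh : ∀ᶠ n in atTop,
      h n ≤ -Real.log (delta (An n)) / ((An n).ncard : ℝ) := by
    filter_upwards [hk_ev] with n hkn
    obtain ⟨hδpos, hδle⟩ := key n hkn
    have hkpos : (0:ℝ) < (k n : ℝ) := by
      have : 0 < k n := by omega
      exact_mod_cast this
    have hlogδ : Real.log (delta (An n)) ≤
        Real.log 2 + ((k n - 2 - N : ℕ) : ℝ) * Real.log a := by
      calc Real.log (delta (An n)) ≤ Real.log (2 * a ^ (k n - 2 - N)) :=
            Real.log_le_log hδpos hδle
        _ = Real.log 2 + ((k n - 2 - N : ℕ) : ℝ) * Real.log a := by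
            rw [Real.log_mul two_ne_zero (pow_ne_zero _ ha0.ne'), Real.log_pow]
    have hcast : ((k n - 2 - N : ℕ) : ℝ) = (k n : ℝ) - (N + 2) := by
      have h2 : k n - 2 - N = k n - (N + 2) := by omega
      rw [h2, Nat.cast_sub hkn]
      push_cast
      ring
    have hlow : ((k n : ℝ) - (N + 2)) * E - Real.log 2 ≤ -Real.log (delta (An n)) := by
      rw [hE]
      rw [hcast] at hlogδ
      nlinarith [hlogδ]
    have hdiv : (((k n : ℝ) - (N + 2)) * E - Real.log 2) / (k n : ℝ) ≤
        -Real.log (delta (An n)) / ((An n).ncard : ℝ) := by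
      have : ((An n).ncard : ℝ) = (k n : ℝ) := rfl
      rw [this]
      exact div_le_div_of_nonneg_right hlow hkpos.le
    refine le_trans (le_of_eq ?_) hdiv
    rw [hhdef]
    field_simp
    ring
  have hklim : Tendsto (fun n => (k n : ℝ)) atTop atTop :=
    tendsto_natCast_atTop_atTop.comp hcard
  have hhlim : Tendsto h atTop (nhds E) := by
    have h0 : Tendsto (fun n => ((N + 2) * E + Real.log 2) / (k n : ℝ)) atTop (nhds 0) :=
      Tendsto.div_atTop tendsto_const_nhds hklim
    have := (tendsto_const_nhds (x := E)).sub h0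
    simpa using this
  have hcontra : E ≤ 0 := le_of_tendsto_of_tendsto hhlim hlog hgh
  linarith
end

section
/- Let {r_n}_{n=1}^∞ and {ρ_n}_{n=1}^∞ be sequences in (0,1) such that r_n is strictly decreasing to 0, ρ_n is strictly increasing to 1, and lim_{n→∞} log(1−ρ_n)/n = 0. For n ∈ ℕ define A_n := { r_1 r_2 ⋯ r_n · ρ_1 ρ_2^2 ⋯ ρ_{n−1}^{n−1} · ρ_n^k : k = 0, 1, …, n } ⊆ ℝ. Then #A_n = n+1, δ(A_n) = ρ_n^{n−1} − ρ_n^n, and lim_{n→∞} (−log δ(A_n))/#A_n = 0. -/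
open MeasureTheory Filter Set

/-- The quantity `δ(F) = min{|x−y| : x ≠ y ∈ F} / max{|z| : z ∈ F}` for a finite set
`F ⊆ ℝ` with at least two elements. -/
noncomputable def deltaR (F : Set ℝ) : ℝ :=
  sInf {s : ℝ | ∃ x ∈ F, ∃ y ∈ F, x ≠ y ∧ |x - y| = s} /
    sSup {s : ℝ | ∃ z ∈ F, |z| = s}

lemma geom_inj {c q : ℝ} (hc : 0 < c) (hq0 : 0 < q) (hq1 : q < 1) :
    Function.Injective (fun k : ℕ => c * q ^ k) := by
  have : StrictAnti (fun k : ℕ => c * q ^ k) := by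
    intro a b hab
    simp only
    exact mul_lt_mul_of_pos_left (pow_lt_pow_right_of_lt_one₀ hq0 hq1 hab) hc
  exact this.injective

lemma geom_ncard {c q : ℝ} (hc : 0 < c) (hq0 : 0 < q) (hq1 : q < 1) (n : ℕ) :
    ((fun k : ℕ => c * q ^ k) '' {k : ℕ | k ≤ n}).ncard = n + 1 := by
  rw [Set.ncard_image_of_injective _ (geom_inj hc hq0 hq1)]
  have : {k : ℕ | k ≤ n} = ↑(Finset.Iic n) := by ext k; simp
  rw [this, Set.ncard_coe_finset, Nat.card_Iic]

lemma geom_delta {c q : ℝ} (hc : 0 < c) (hq0 : 0 < q) (hq1 : q < 1) {n : ℕ} (hn : 1 ≤ n) :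
    deltaR ((fun k : ℕ => c * q ^ k) '' {k : ℕ | k ≤ n}) = q ^ (n - 1) - q ^ n := by
  set A := (fun k : ℕ => c * q ^ k) '' {k : ℕ | k ≤ n} with hA
  have hqn : q ^ n < q ^ (n - 1) := pow_lt_pow_right_of_lt_one₀ hq0 hq1 (by omega)
  have hgap : (0:ℝ) < c * (q ^ (n-1) - q ^ n) := mul_pos hc (by linarith)
  have hlb : ∀ j k : ℕ, j ≤ n → k ≤ n → j < k →
      c * (q ^ (n-1) - q ^ n) ≤ c * q ^ j - c * q ^ k := by
    intro j k hj hk hjk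
    have e1 : j + (k - j) = k := by omega
    have h1 : q ^ j - q ^ k = q ^ j * (1 - q ^ (k - j)) := by
      rw [mul_sub, mul_one, ← pow_add, e1]
    have e2 : (n - 1) + 1 = n := by omega
    have h2 : q ^ (n-1) - q ^ n = q ^ (n-1) * (1 - q) := by
      rw [mul_sub, mul_one, ← pow_succ, e2]
    rw [← mul_sub, h1, h2]
    have hA1 : q ^ (n-1) ≤ q ^ j := pow_le_pow_of_le_one hq0.le hq1.le (by omega)
    have hA2 : q ^ (k - j) ≤ q := by
      have := pow_le_pow_of_le_one hq0.le hq1.le (show 1 ≤ k - j by omega)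
      simpa using this
    have hA3 : (0:ℝ) ≤ 1 - q ^ (k - j) := by
      have := pow_le_one₀ hq0.le hq1.le (n := k - j)
      linarith
    have := mul_le_mul hA1 (by linarith : 1 - q ≤ 1 - q ^ (k-j)) (by linarith) (by positivity)
    nlinarith [this]
  have hnum : sInf {s : ℝ | ∃ x ∈ A, ∃ y ∈ A, x ≠ y ∧ |x - y| = s}
      = c * (q ^ (n-1) - q ^ n) := by
    have hne : (fun k : ℕ => c * q ^ k) (n-1) ≠ (fun k : ℕ => c * q ^ k) n := by
      dsimp only
      intro h
      have := mul_left_cancel₀ hc.ne' h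
      nlinarith
    have hmem : c * (q ^ (n-1) - q ^ n) ∈
        {s : ℝ | ∃ x ∈ A, ∃ y ∈ A, x ≠ y ∧ |x - y| = s} := by
      refine ⟨c * q ^ (n-1), ⟨n-1, by simp, rfl⟩, c * q ^ n, ⟨n, by simp, rfl⟩, hne, ?_⟩
      rw [← mul_sub, abs_of_pos hgap]
    have hlow : ∀ s ∈ {s : ℝ | ∃ x ∈ A, ∃ y ∈ A, x ≠ y ∧ |x - y| = s},
        c * (q ^ (n-1) - q ^ n) ≤ s := by
      rintro s ⟨x, ⟨j, hj, rfl⟩, y, ⟨k, hk, rfl⟩, hxy, rfl⟩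
      simp only [Set.mem_setOf_eq] at hj hk
      dsimp only at hxy ⊢
      rcases lt_trichotomy j k with h | h | h
      · rw [abs_of_nonneg (by linarith [hlb j k hj hk h])]
        exact hlb j k hj hk h
      · exact absurd (by rw [h]) hxy
      · rw [abs_sub_comm, abs_of_nonneg (by linarith [hlb k j hk hj h])]
        exact hlb k j hk hj h
    exact le_antisymm
      (csInf_le ⟨0, by rintro s ⟨x, hx, y, hy, hxy, rfl⟩; exact abs_nonneg _⟩ hmem)
      (le_csInf ⟨_, hmem⟩ hlow)
  have hub : ∀ s ∈ {s : ℝ | ∃ z ∈ A, |z| = s}, s ≤ c := by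
    rintro s ⟨z, ⟨k, hk, rfl⟩, rfl⟩
    dsimp only
    rw [abs_of_pos (by positivity)]
    nlinarith [pow_le_one₀ hq0.le hq1.le (n := k)]
  have hcmem : c ∈ {s : ℝ | ∃ z ∈ A, |z| = s} :=
    ⟨c * q ^ 0, ⟨0, by simp, rfl⟩, by simp [abs_of_pos hc]⟩
  have hden : sSup {s : ℝ | ∃ z ∈ A, |z| = s} = c :=
    le_antisymm (csSup_le ⟨_, hcmem⟩ hub) (le_csSup ⟨c, hub⟩ hcmem)
  rw [deltaR, hnum, hden, mul_div_cancel_left₀ _ hc.ne']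


/-- The example of Remark (b): with `r_n ↘ 0`, `ρ_n ↗ 1` in `(0,1)` satisfying
`log(1−ρ_n)/n → 0`, the sets
`A_n = { r_1⋯r_n · ρ_1 ρ_2² ⋯ ρ_{n−1}^{n−1} · ρ_n^k : 0 ≤ k ≤ n }`
satisfy `#A_n = n+1`, `δ(A_n) = ρ_n^{n−1} − ρ_n^n` and `(−log δ(A_n))/#A_n → 0`. -/
theorem stmt6 (r ρ : ℕ → ℝ)
    (hr : ∀ n, 1 ≤ n → r n ∈ Set.Ioo (0 : ℝ) 1)
    (hρ : ∀ n, 1 ≤ n → ρ n ∈ Set.Ioo (0 : ℝ) 1)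
    (hrdec : ∀ m n, 1 ≤ m → m < n → r n < r m)
    (hr0 : Tendsto r atTop (nhds 0))
    (hρinc : ∀ m n, 1 ≤ m → m < n → ρ m < ρ n)
    (hρ1 : Tendsto ρ atTop (nhds 1))
    (hlog1 : Tendsto (fun n => Real.log (1 - ρ n) / (n : ℝ)) atTop (nhds 0))
    (A : ℕ → Set ℝ)
    (hA : ∀ n, A n =
      (fun k : ℕ => (∏ i ∈ Finset.Icc 1 n, r i) *
        (∏ i ∈ Finset.Icc 1 (n - 1), ρ i ^ i) * ρ n ^ k) '' {k : ℕ | k ≤ n}) :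
    (∀ n, 1 ≤ n → (A n).ncard = n + 1) ∧
    (∀ n, 1 ≤ n → deltaR (A n) = ρ n ^ (n - 1) - ρ n ^ n) ∧
    Tendsto (fun n => -Real.log (deltaR (A n)) / ((A n).ncard : ℝ))
      atTop (nhds 0) := by
  have hcq : ∀ n, 1 ≤ n → 0 < (∏ i ∈ Finset.Icc 1 n, r i) *
      (∏ i ∈ Finset.Icc 1 (n - 1), ρ i ^ i) := by
    intro n hn
    apply mul_pos
    · exact Finset.prod_pos fun i hi => (hr i (Finset.mem_Icc.mp hi).1).1
    · exact Finset.prod_pos fun i hi => pow_pos (hρ i (Finset.mem_Icc.mp hi).1).1 i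
  have hcard : ∀ n, 1 ≤ n → (A n).ncard = n + 1 := by
    intro n hn
    rw [hA n]
    exact geom_ncard (hcq n hn) (hρ n hn).1 (hρ n hn).2 n
  have hdelta : ∀ n, 1 ≤ n → deltaR (A n) = ρ n ^ (n - 1) - ρ n ^ n := by
    intro n hn
    rw [hA n]
    exact geom_delta (hcq n hn) (hρ n hn).1 (hρ n hn).2 hn
  refine ⟨hcard, hdelta, ?_⟩
  have hlogρ : Tendsto (fun n => Real.log (ρ n)) atTop (nhds 0) := by
    have := (Real.continuousAt_log (by norm_num : (1:ℝ) ≠ 0)).tendsto.comp hρ1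
    simpa [Function.comp_def] using this
  have ht1 : Tendsto (fun n : ℕ => (((n:ℝ)-1)/((n:ℝ)+1)) * Real.log (ρ n))
      atTop (nhds 0) := by
    apply squeeze_zero_norm (a := fun n => |Real.log (ρ n)|) (fun n => ?_)
      (by simpa using hlogρ.abs)
    have hn1 : (0:ℝ) < (n:ℝ)+1 := by positivity
    have habs : |((n:ℝ)-1)/((n:ℝ)+1)| ≤ 1 := by
      rw [abs_div, abs_of_pos hn1, div_le_one hn1]
      refine abs_le.mpr ⟨by linarith [Nat.cast_nonneg (α := ℝ) n], by linarith⟩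
    rw [Real.norm_eq_abs, abs_mul]
    calc |((n:ℝ)-1)/((n:ℝ)+1)| * |Real.log (ρ n)|
        ≤ 1 * |Real.log (ρ n)| := mul_le_mul_of_nonneg_right habs (abs_nonneg _)
      _ = |Real.log (ρ n)| := one_mul _
  have ht2 : Tendsto (fun n : ℕ => Real.log (1 - ρ n)/((n:ℝ)+1)) atTop (nhds 0) := by
    apply squeeze_zero_norm' (a := fun n : ℕ => |Real.log (1 - ρ n) / (n:ℝ)|)
      ?_ (by simpa using hlog1.abs)
    filter_upwards [eventually_ge_atTop 1] with n hn
    have hn0 : (0:ℝ) < (n:ℝ) := by exact_mod_cast hn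
    have e1 : |(n:ℝ)+1| = (n:ℝ)+1 := abs_of_pos (by linarith)
    have e2 : |(n:ℝ)| = (n:ℝ) := abs_of_pos hn0
    rw [Real.norm_eq_abs, abs_div, abs_div, e1, e2]
    gcongr
    linarith
  have hg : Tendsto (fun n : ℕ =>
      -(((n:ℝ)-1) * Real.log (ρ n) + Real.log (1 - ρ n)) / ((n:ℝ)+1))
      atTop (nhds 0) := by
    have h := (ht1.add ht2).neg
    rw [add_zero, neg_zero] at h
    exact h.congr fun n => by ring
  have hkey : (fun n : ℕ =>
      -(((n:ℝ)-1) * Real.log (ρ n) + Real.log (1 - ρ n)) / ((n:ℝ)+1))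
      =ᶠ[atTop] (fun n => -Real.log (deltaR (A n)) / ((A n).ncard : ℝ)) := by
    filter_upwards [eventually_ge_atTop 1] with n hn
    have hρn := hρ n hn
    have e : n - 1 + 1 = n := by omega
    have h1 : deltaR (A n) = ρ n ^ (n-1) * (1 - ρ n) := by
      rw [hdelta n hn, mul_sub, mul_one, ← pow_succ, e]
    have hne1 : (1 : ℝ) - ρ n ≠ 0 := sub_ne_zero.mpr hρn.2.ne'
    rw [h1, hcard n hn, Real.log_mul (pow_ne_zero _ (ne_of_gt hρn.1)) hne1, Real.log_pow]
    push_cast [Nat.cast_sub hn]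
    ring
  exact hg.congr' hkey
end

section
/- Let d ≥ 1 and 0 < α < 1. There exists a constant C > 0 depending only on α and d with the following property. Let A₀ = {x_1, …, x_k} ⊆ ℝ^d ∖ {0} be a finite set with k ≥ 2 distinct elements, let M := max{‖x_i‖}, δ := δ(A₀), L := ⌈ d/(α M δ) ⌉, and p ∈ (0,1). Equip Ω_L := ({0,…,L−1}^d → {0,1}) with the product Bernoulli measure P_p under which the coordinates are independent and each equals 1 with probability p, and for ω ∈ Ω_L set E(ω) := ∪ { I_j(L) : ω(j) = 1 } and V(ω) := { x ∈ [0,1]^d : there exists T ∈ S_α^{1/α} with TA₀ + x ⊆ E(ω) }. Then ∫_{Ω_L} μ(E(ω)) dP_p(ω) = p and ∫_{Ω_L} μ(V(ω)) dP_p(ω) ≤ C (L M k)^{d²} p^k. -/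
open MeasureTheory Filter Set

/-- The closed unit cube `[0,1]^d` in `ℝ^d`. -/
def unitCube (d : ℕ) : Set (EuclideanSpace ℝ (Fin d)) :=
  {y | ∀ i, y i ∈ Set.Icc (0 : ℝ) 1}

/-- `‖T‖* = max_{‖u‖ = 1} ‖T u‖`. -/
noncomputable def opMax {d : ℕ}
    (T : EuclideanSpace ℝ (Fin d) →ₗ[ℝ] EuclideanSpace ℝ (Fin d)) : ℝ :=
  sSup {s : ℝ | ∃ u : EuclideanSpace ℝ (Fin d), ‖u‖ = 1 ∧ ‖T u‖ = s}

/-- `‖T‖_* = min_{‖u‖ = 1} ‖T u‖`. -/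
noncomputable def opMin {d : ℕ}
    (T : EuclideanSpace ℝ (Fin d) →ₗ[ℝ] EuclideanSpace ℝ (Fin d)) : ℝ :=
  sInf {s : ℝ | ∃ u : EuclideanSpace ℝ (Fin d), ‖u‖ = 1 ∧ ‖T u‖ = s}

/-- Membership in `S_α^β`: an invertible linear map `T` with `α < ‖T‖_*` and `‖T‖* < β`. -/
def memS {d : ℕ} (α β : ℝ)
    (T : EuclideanSpace ℝ (Fin d) ≃ₗ[ℝ] EuclideanSpace ℝ (Fin d)) : Prop :=
  α < opMin (T : EuclideanSpace ℝ (Fin d) →ₗ[ℝ] EuclideanSpace ℝ (Fin d)) ∧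
    opMax (T : EuclideanSpace ℝ (Fin d) →ₗ[ℝ] EuclideanSpace ℝ (Fin d)) < β

/-- The open grid cube `I_j(L) = ∏_i (j_i/L, (j_i+1)/L)` indexed by `j : Fin d → Fin L`. -/
def gridCubeF (d L : ℕ) (j : Fin d → Fin L) : Set (EuclideanSpace ℝ (Fin d)) :=
  {y | ∀ i, ((j i : ℕ) : ℝ) / L < y i ∧ y i < (((j i : ℕ) : ℝ) + 1) / L}

/-- The random open set `E(ω) = ⋃ {I_j(L) : ω(j) = 1}`. -/
def randomSet (d L : ℕ) (ω : (Fin d → Fin L) → Bool) : Set (EuclideanSpace ℝ (Fin d)) :=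
  ⋃ j ∈ {j : Fin d → Fin L | ω j = true}, gridCubeF d L j

/-- The product Bernoulli measure on `Ω_L = ({0,…,L−1}^d → {0,1})` with parameter `p`. -/
noncomputable def bernoulliProduct (d L : ℕ) (p : ℝ) (hp : 0 ≤ p) (hp1 : p ≤ 1) :
    Measure ((Fin d → Fin L) → Bool) :=
  Measure.pi fun _ : Fin d → Fin L =>
    (PMF.bernoulli (Real.toNNReal p) (Real.toNNReal_le_one.mpr hp1)).toMeasure



section Aux

open Module

/-- IVT for affine maps along a segment, staying in a sign cell. -/
lemma affine_ivt {E : Type} [AddCommGroup E] [Module ℝ E] {n : ℕ}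
    (g : Fin n → E →ᵃ[ℝ] ℝ) (f : E →ᵃ[ℝ] ℝ) (a b : E)
    (hg : ∀ i, SignType.sign (g i b) = SignType.sign (g i a))
    (hfa : 0 < f a) (hfb : f b < 0) :
    ∃ c : E, (∀ i, SignType.sign (g i c) = SignType.sign (g i a)) ∧ f c = 0 := by
  set t : ℝ := f a / (f a - f b) with ht
  have hden : 0 < f a - f b := by linarith
  have ht0 : 0 < t := div_pos hfa hden
  have ht1 : t < 1 := by
    rw [div_lt_one hden]; linarith
  have hmul : t * (f a - f b) = f a := div_mul_cancel₀ _ (ne_of_gt hden)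
  refine ⟨AffineMap.lineMap a b t, ?_, ?_⟩
  · intro i
    have h := AffineMap.apply_lineMap (g i) a b t
    rw [h, AffineMap.lineMap_apply_module]
    rcases lt_trichotomy (g i a) 0 with hc | hc | hc
    · have hb : g i b < 0 := by
        have := hg i
        rw [sign_neg hc] at this
        rcases lt_trichotomy (g i b) 0 with h1 | h1 | h1
        · exact h1
        · rw [h1, sign_zero] at this; exact absurd this (by decide)
        · rw [sign_pos h1] at this; exact absurd this (by decide)
      have : (1 - t) • (g i a) + t • (g i b) < 0 := by
        simp only [smul_eq_mul]; nlinarith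
      rw [sign_neg this, sign_neg hc]
    · have hb : g i b = 0 := by
        have := hg i
        rw [hc, sign_zero] at this
        exact sign_eq_zero_iff.mp this
      simp [hb, hc]
    · have hb : 0 < g i b := by
        have := hg i
        rw [sign_pos hc] at this
        rcases lt_trichotomy (g i b) 0 with h1 | h1 | h1
        · rw [sign_neg h1] at this; exact absurd this (by decide)
        · rw [h1, sign_zero] at this; exact absurd this (by decide)
        · exact h1
      have : 0 < (1 - t) • (g i a) + t • (g i b) := by
        simp only [smul_eq_mul]; nlinarith
      rw [sign_pos this, sign_pos hc]
  · have h := AffineMap.apply_lineMap f a b t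
    rw [h, AffineMap.lineMap_apply_module]
    simp only [smul_eq_mul]
    nlinarith [hmul]

/-- Sign-pattern counting for arrangements of affine hyperplanes. -/
lemma signPattern_count (n : ℕ) :
    ∀ (D : ℕ) (E : Type) [AddCommGroup E] [Module ℝ E] [FiniteDimensional ℝ E],
      finrank ℝ E ≤ D → ∀ f : Fin n → (E →ᵃ[ℝ] ℝ),
      Set.ncard {σ : Fin n → SignType | ∃ v : E, ∀ i, SignType.sign (f i v) = σ i}
        ≤ (2 * n + 1) ^ D := by
  induction n with
  | zero =>
    intro D E _ _ _ _ f
    have hsub : {σ : Fin 0 → SignType | ∃ v : E, ∀ i, SignType.sign (f i v) = σ i}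
        ⊆ {fun i => i.elim0} := by
      intro σ _
      simp only [Set.mem_singleton_iff]
      funext i; exact i.elim0
    calc Set.ncard _ ≤ Set.ncard {fun i : Fin 0 => i.elim0} :=
          Set.ncard_le_ncard hsub (Set.finite_singleton _)
      _ = 1 := Set.ncard_singleton _
      _ ≤ (2 * 0 + 1) ^ D := Nat.one_le_pow _ _ (by norm_num)
  | succ n IH =>
    intro D E _ _ _ hD f
    set S := {σ : Fin (n + 1) → SignType | ∃ v : E, ∀ i, SignType.sign (f i v) = σ i} with hS
    set f' : Fin n → (E →ᵃ[ℝ] ℝ) := fun i => f i.castSucc with hf'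
    set S' := {σ : Fin n → SignType | ∃ v : E, ∀ i, SignType.sign (f' i v) = σ i} with hS'
    by_cases hsub : Subsingleton E
    · -- all values determined by value at 0
      have : S ⊆ {fun i => SignType.sign (f i 0)} := by
        intro σ ⟨v, hv⟩
        simp only [Set.mem_singleton_iff]
        funext i
        rw [← hv i, Subsingleton.elim (0 : E) v]
      calc S.ncard ≤ _ := Set.ncard_le_ncard this (Set.finite_singleton _)
        _ = 1 := Set.ncard_singleton _
        _ ≤ _ := Nat.one_le_pow _ _ (by norm_num)
    · have : Nontrivial E := not_subsingleton_iff_nontrivial.mp hsub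
      have hfr : 1 ≤ finrank ℝ E := finrank_pos
      have hD1 : 1 ≤ D := le_trans hfr hD
      by_cases hlin : (f (Fin.last n)).linear = 0
      · -- last functional is constant
        have hconst : ∀ v : E, f (Fin.last n) v = f (Fin.last n) 0 := by
          intro v
          have := (f (Fin.last n)).map_vadd 0 v
          simp only [vadd_eq_add, add_zero, hlin, LinearMap.zero_apply, zero_add] at this
          rw [this]
        have hmap : ∀ σ ∈ S, (fun i : Fin n => σ i.castSucc) ∈ S' := by
          rintro σ ⟨v, hv⟩
          exact ⟨v, fun i => hv i.castSucc⟩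
        have hinj : Set.InjOn (fun (σ : Fin (n+1) → SignType) (i : Fin n) => σ i.castSucc) S := by
          rintro σ ⟨v, hv⟩ τ ⟨w, hw⟩ hst
          funext i
          refine Fin.lastCases ?_ (fun j => ?_) i
          · rw [← hv (Fin.last n), ← hw (Fin.last n), hconst v, hconst w]
          · exact congrFun hst j
        calc S.ncard ≤ S'.ncard := Set.ncard_le_ncard_of_injOn _ hmap hinj (Set.toFinite _)
          _ ≤ (2 * n + 1) ^ D := IH D E (by omega) f'
          _ ≤ (2 * (n + 1) + 1) ^ D := Nat.pow_le_pow_left (by omega) _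
      · -- last functional has nonzero linear part
        set ℓ := (f (Fin.last n)).linear with hℓ
        obtain ⟨u, hu⟩ : ∃ u : E, ℓ u ≠ 0 := by
          by_contra h
          push_neg at h
          exact hlin (LinearMap.ext fun u => h u)
        have heval : ∀ v : E, f (Fin.last n) v = ℓ v + f (Fin.last n) 0 := by
          intro v
          have := (f (Fin.last n)).map_vadd 0 v
          simpa [vadd_eq_add] using this
        set x₀ : E := (-(f (Fin.last n) 0) / ℓ u) • u with hx₀
        have hfx₀ : f (Fin.last n) x₀ = 0 := by
          rw [heval, hx₀, _root_.map_smul, smul_eq_mul, div_mul_cancel₀ _ hu]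
          ring
        set V := LinearMap.ker ℓ with hV
        have hVrank : finrank ℝ V ≤ D - 1 := by
          rw [hV]
          have h1 := LinearMap.finrank_range_add_finrank_ker ℓ
          have h2 : 1 ≤ finrank ℝ (LinearMap.range ℓ) := by
            have : Nontrivial (LinearMap.range ℓ) := by
              refine ⟨⟨⟨ℓ u, LinearMap.mem_range_self _ u⟩, 0, ?_⟩⟩
              simp [Subtype.ext_iff, hu]
            exact finrank_pos
          omega
        -- affine inclusion V → E, v ↦ ↑v + x₀
        set ι : V →ᵃ[ℝ] E := V.subtype.toAffineMap + AffineMap.const ℝ V x₀ with hι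
        have hιapp : ∀ v : V, ι v = (v : E) + x₀ := fun v => rfl
        set g : Fin n → (V →ᵃ[ℝ] ℝ) := fun i => (f' i).comp ι with hg
        set G := {σ : Fin n → SignType | ∃ w : V, ∀ i, SignType.sign (g i w) = σ i} with hG
        -- the three pieces
        set Sb0 := {σ ∈ S | σ (Fin.last n) = 0} with hSb0
        set Sb1 := {σ ∈ S | σ (Fin.last n) = 1 ∧
          ∃ τ ∈ S, (∀ i : Fin n, τ i.castSucc = σ i.castSucc) ∧ τ (Fin.last n) = -1} with hSb1
        set Sa := S \ (Sb0 ∪ Sb1) with hSa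
        -- a point in a cell with f last = 0 gives a G-pattern
        have hzeroG : ∀ v : E, f (Fin.last n) v = 0 →
            (fun i : Fin n => SignType.sign (f' i v)) ∈ G := by
          intro v hv
          have hvV : v - x₀ ∈ V := by
            rw [hV, LinearMap.mem_ker, map_sub]
            have h1 : ℓ v = -(f (Fin.last n) 0) := by
              have := heval v; rw [hv] at this; linarith
            have h2 : ℓ x₀ = -(f (Fin.last n) 0) := by
              have := heval x₀; rw [hfx₀] at this; linarith
            rw [h1, h2, sub_self]
          refine ⟨⟨v - x₀, hvV⟩, fun i => ?_⟩
          have : g i ⟨v - x₀, hvV⟩ = f' i v := by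
            rw [hg]
            simp only [AffineMap.comp_apply, hιapp]
            congr 1
            simp [sub_add_cancel]
          rw [this]
        -- counting
        have hcount : S.ncard ≤ S'.ncard + (G.ncard + G.ncard) := by
          have hcover : S ⊆ Sa ∪ (Sb0 ∪ Sb1) := by
            intro σ hσ
            by_cases h : σ ∈ Sb0 ∪ Sb1
            · exact Set.mem_union_right _ h
            · exact Set.mem_union_left _ ⟨hσ, h⟩
          have h1 : S.ncard ≤ (Sa ∪ (Sb0 ∪ Sb1)).ncard :=
            Set.ncard_le_ncard hcover (Set.toFinite _)
          have h2 : (Sa ∪ (Sb0 ∪ Sb1)).ncard ≤ Sa.ncard + (Sb0.ncard + Sb1.ncard) :=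
            le_trans (Set.ncard_union_le _ _) (by
              gcongr
              exact Set.ncard_union_le _ _)
          -- Sa injects into S'
          have hSaS' : Sa.ncard ≤ S'.ncard := by
            refine Set.ncard_le_ncard_of_injOn
              (fun σ (i : Fin n) => σ i.castSucc) ?_ ?_ (Set.toFinite _)
            · rintro σ ⟨⟨v, hv⟩, _⟩
              exact ⟨v, fun i => hv i.castSucc⟩
            · rintro σ ⟨hσS, hσn⟩ τ ⟨hτS, hτn⟩ hst
              simp only [Set.mem_union, hSb0, hSb1, Set.mem_setOf_eq, not_or, not_and,
                not_exists] at hσn hτn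
              funext i
              refine Fin.lastCases ?_ (fun j => congrFun hst j) i
              by_contra hne
              -- σ last ≠ τ last, neither is 0
              have hσ0 : σ (Fin.last n) ≠ 0 := fun h => hσn.1 hσS h
              have hτ0 : τ (Fin.last n) ≠ 0 := fun h => hτn.1 hτS h
              -- one of them is 1 and other is -1
              have hkey : ∀ a b : SignType, a ≠ b → a ≠ 0 → b ≠ 0 →
                  (a = 1 ∧ b = -1) ∨ (a = -1 ∧ b = 1) := by decide
              rcases hkey _ _ hne hσ0 hτ0 with ⟨h1, h2⟩ | ⟨h1, h2⟩
              · exact hσn.2 hσS h1 τ hτS (fun i => (congrFun hst i).symm) h2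
              · exact hτn.2 hτS h2 σ hσS (fun i => congrFun hst i) h1
          -- Sb0 injects into G
          have hSb0G : Sb0.ncard ≤ G.ncard := by
            refine Set.ncard_le_ncard_of_injOn
              (fun σ (i : Fin n) => σ i.castSucc) ?_ ?_ (Set.toFinite _)
            · rintro σ ⟨⟨v, hv⟩, h0⟩
              have hv0 : f (Fin.last n) v = 0 := by
                have := hv (Fin.last n)
                rw [h0] at this
                exact sign_eq_zero_iff.mp this
              have := hzeroG v hv0
              convert this using 1
              funext i
              show σ i.castSucc = _
              exact (hv i.castSucc).symm
            · rintro σ ⟨hσS, hσ0⟩ τ ⟨hτS, hτ0⟩ hst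
              funext i
              refine Fin.lastCases (by rw [hσ0, hτ0]) (fun j => congrFun hst j) i
          -- Sb1 injects into G
          have hSb1G : Sb1.ncard ≤ G.ncard := by
            refine Set.ncard_le_ncard_of_injOn
              (fun σ (i : Fin n) => σ i.castSucc) ?_ ?_ (Set.toFinite _)
            · rintro σ ⟨⟨v, hv⟩, h1, τ, ⟨w, hw⟩, hτσ, hτ⟩
              -- v has f last > 0, w has f last < 0, same pattern on f'
              have hfv : 0 < f (Fin.last n) v := by
                have := hv (Fin.last n); rw [h1] at this
                exact sign_eq_one_iff.mp this
              have hfw : f (Fin.last n) w < 0 := by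
                have := hw (Fin.last n); rw [hτ] at this
                exact sign_eq_neg_one_iff.mp this
              have hsame : ∀ i : Fin n, SignType.sign (f' i w) = SignType.sign (f' i v) := by
                intro i
                rw [hw i.castSucc, hv i.castSucc, hτσ i]
              obtain ⟨c, hc, hc0⟩ := affine_ivt f' (f (Fin.last n)) v w hsame hfv hfw
              have := hzeroG c hc0
              convert this using 1
              funext i
              show σ i.castSucc = _
              rw [hc i]
              exact (hv i.castSucc).symm
            · rintro σ ⟨hσS, hσ1, _⟩ τ ⟨hτS, hτ1, _⟩ hst
              funext i
              refine Fin.lastCases (by rw [hσ1, hτ1]) (fun j => congrFun hst j) i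
          omega
        -- put it together
        have hG : G.ncard ≤ (2 * n + 1) ^ (D - 1) := IH (D - 1) V hVrank g
        have hS' : S'.ncard ≤ (2 * n + 1) ^ D := IH D E hD f'
        have harith : (2 * n + 1) ^ D + ((2 * n + 1) ^ (D - 1) + (2 * n + 1) ^ (D - 1))
            ≤ (2 * (n + 1) + 1) ^ D := by
          obtain ⟨D', rfl⟩ : ∃ D', D = D' + 1 := ⟨D - 1, by omega⟩
          simp only [Nat.add_sub_cancel]
          have h1 : (2 * n + 1) ^ (D' + 1) + ((2 * n + 1) ^ D' + (2 * n + 1) ^ D')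
              = (2 * n + 3) * (2 * n + 1) ^ D' := by ring
          rw [h1]
          calc (2 * n + 3) * (2 * n + 1) ^ D' ≤ (2 * n + 3) * (2 * n + 3) ^ D' := by
                gcongr <;> omega
            _ = (2 * (n + 1) + 1) ^ (D' + 1) := by ring_nf
        omega

lemma signPattern_count' {ι : Type} [Fintype ι] (D : ℕ) (E : Type) [AddCommGroup E]
    [Module ℝ E] [FiniteDimensional ℝ E] (hD : finrank ℝ E ≤ D) (f : ι → E →ᵃ[ℝ] ℝ) :
    Set.ncard {σ : ι → SignType | ∃ v : E, ∀ i, SignType.sign (f i v) = σ i}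
      ≤ (2 * Fintype.card ι + 1) ^ D := by
  set e : Fin (Fintype.card ι) ≃ ι := (Fintype.equivFin ι).symm with he
  calc Set.ncard {σ : ι → SignType | ∃ v : E, ∀ i, SignType.sign (f i v) = σ i}
      ≤ Set.ncard {σ : Fin (Fintype.card ι) → SignType |
          ∃ v : E, ∀ i, SignType.sign (f (e i) v) = σ i} := by
        refine Set.ncard_le_ncard_of_injOn (fun σ => σ ∘ e) ?_ ?_ (Set.toFinite _)
        · rintro σ ⟨v, hv⟩
          exact ⟨v, fun i => hv (e i)⟩
        · intro σ _ τ _ h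
          funext i
          have := congrFun h (e.symm i)
          simpa using this
    _ ≤ (2 * Fintype.card ι + 1) ^ D := signPattern_count _ D E hD _

lemma window_card (L : ℕ) (hL : 0 < L) (B zc : ℝ) (hB : 0 ≤ B) :
    letI := Classical.decPred (fun t : Fin (L+1) => |(t : ℝ)/L - zc| ≤ B + 1/L)
    (((Finset.univ.filter (fun t : Fin (L+1) => |(t : ℝ)/L - zc| ≤ B + 1/L)).card : ℝ))
      ≤ 2*L*B + 3 := by
  classical
  have hLpos : (0:ℝ) < L := by exact_mod_cast hL
  set a : ℤ := ⌈(zc - B - 1/L) * L⌉ with ha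
  set b : ℤ := ⌊(zc + B + 1/L) * L⌋ with hb
  have hcard : (Finset.univ.filter (fun t : Fin (L+1) => |(t : ℝ)/L - zc| ≤ B + 1/L)).card
      ≤ (Finset.Icc a b).card := by
    refine Finset.card_le_card_of_injOn (fun t => ((t : ℕ) : ℤ)) ?_ ?_
    · intro t ht
      simp only [Finset.mem_coe, Finset.mem_filter, Finset.mem_univ, true_and] at ht
      rw [abs_le] at ht
      simp only [Finset.mem_coe, Finset.mem_Icc]
      constructor
      · rw [ha]
        apply Int.ceil_le.mpr
        push_cast
        rw [← sub_nonneg]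
        have h1 : zc - B - 1/L ≤ (t:ℝ)/L := by linarith [ht.1]
        have := mul_le_mul_of_nonneg_right h1 hLpos.le
        rw [div_mul_cancel₀ _ (ne_of_gt hLpos)] at this
        linarith
      · rw [hb]
        apply Int.le_floor.mpr
        push_cast
        have h1 : (t:ℝ)/L ≤ zc + B + 1/L := by linarith [ht.2]
        have := mul_le_mul_of_nonneg_right h1 hLpos.le
        rw [div_mul_cancel₀ _ (ne_of_gt hLpos)] at this
        linarith
    · intro s _ t _ hst
      have h' : ((s:ℕ):ℤ) = ((t:ℕ):ℤ) := hst
      exact Fin.ext (by exact_mod_cast h')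
  have h2 : ((Finset.Icc a b).card : ℝ) ≤ 2*L*B + 3 := by
    rw [Int.card_Icc]
    have hbb : (b : ℝ) ≤ (zc + B + 1/L) * L := Int.floor_le _
    have haa : (zc - B - 1/L) * L ≤ (a : ℝ) := Int.le_ceil _
    rcases le_or_gt (b + 1 - a) 0 with h | h
    · rw [Int.toNat_of_nonpos h]
      have : (0:ℝ) ≤ 2*L*B + 3 := by positivity
      simpa using this
    · have hcast : ((b + 1 - a).toNat : ℝ) = (b:ℝ) + 1 - a := by
        have h2 := Int.toNat_of_nonneg h.le
        exact_mod_cast congrArg (Int.cast : ℤ → ℝ) h2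
      rw [hcast]
      have hexp : (zc + B + 1/L) * L - (zc - B - 1/L) * L = 2*B*L + 2 := by
        field_simp
        ring
      nlinarith [hbb, haa]
  calc _ ≤ ((Finset.Icc a b).card : ℝ) := by exact_mod_cast hcard
    _ ≤ _ := h2

/-- Counting realizable "row patterns": assignments of grid levels to the points
`x i` realizable by a single linear functional. -/
lemma rowPattern_count (d L k : ℕ) (hL : 0 < L) (x : Fin k → EuclideanSpace ℝ (Fin d))
    (B zc : ℝ) (W : Finset (Fin (L+1)))
    (P : (Fin k → Fin L) → Prop)
    (hP : ∀ m, P m ↔ ∃ φ : EuclideanSpace ℝ (Fin d) →ₗ[ℝ] ℝ,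
      (∀ i, |φ (x i)| ≤ B) ∧
      ∀ i, ((m i : ℕ) : ℝ)/L < φ (x i) + zc ∧ φ (x i) + zc < (((m i : ℕ) : ℝ)+1)/L)
    (hW : ∀ m, P m → ∀ i, Fin.castSucc (m i) ∈ W) :
    Set.ncard {m : Fin k → Fin L | P m} ≤ (2 * (k * W.card) + 1) ^ d := by
  classical
  have hLpos : (0:ℝ) < L := by exact_mod_cast hL
  set E' := (EuclideanSpace ℝ (Fin d) →ₗ[ℝ] ℝ) with hE'
  have hdim : finrank ℝ E' ≤ d := by
    show finrank ℝ (EuclideanSpace ℝ (Fin d) →ₗ[ℝ] ℝ) ≤ d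
    rw [Module.finrank_linearMap, finrank_euclideanSpace, finrank_self]
    simp
  set ι : Type := Fin k × {t : Fin (L+1) // t ∈ W} with hι
  have hcard : Fintype.card ι = k * W.card := by
    show Fintype.card (Fin k × {t : Fin (L+1) // t ∈ W}) = k * W.card
    rw [Fintype.card_prod, Fintype.card_fin, Fintype.card_coe]
  -- the affine functionals on the dual space
  set f : ι → (E' →ᵃ[ℝ] ℝ) := fun q =>
    (LinearMap.applyₗ (x q.1)).toAffineMap +
      AffineMap.const ℝ E' (zc - (((q.2 : Fin (L+1)) : ℕ) : ℝ)/L) with hf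
  have hfval : ∀ (q : ι) (φ : E'), f q φ = φ (x q.1) + (zc - (((q.2 : Fin (L+1)) : ℕ) : ℝ)/L) :=
    fun q φ => rfl
  -- choose witnesses
  have hexists : ∀ m : Fin k → Fin L, ∃ φ : E', P m →
      ((∀ i, |φ (x i)| ≤ B) ∧
       ∀ i, ((m i : ℕ) : ℝ)/L < φ (x i) + zc ∧ φ (x i) + zc < (((m i : ℕ) : ℝ)+1)/L) := by
    intro m
    by_cases h : P m
    · obtain ⟨φ, hφ⟩ := (hP m).mp h
      exact ⟨φ, fun _ => hφ⟩
    · exact ⟨0, fun h' => absurd h' h⟩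
  choose wit hwit using hexists
  -- the injection into sign patterns
  set F : (Fin k → Fin L) → (ι → SignType) := fun m q => SignType.sign (f q (wit m)) with hF
  have key : ∀ m m', P m → P m' → F m = F m' → ∀ i : Fin k, ¬((m i : ℕ) < (m' i : ℕ)) := by
    intro m m' hm hm' hFmm i hlt
    have hWm' : Fin.castSucc (m' i) ∈ W := hW m' hm' i
    set q : ι := (i, ⟨Fin.castSucc (m' i), hWm'⟩) with hq
    have hvq : (((q.2 : Fin (L+1)) : ℕ) : ℝ) = ((m' i : ℕ) : ℝ) := by
      rw [hq]; simp [Fin.coe_castSucc]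
    have h1 : f q (wit m) < 0 := by
      rw [hfval, hvq]
      have hub := ((hwit m hm).2 i).2
      have hnat : ((m i : ℕ):ℝ) + 1 ≤ ((m' i : ℕ):ℝ) := by exact_mod_cast hlt
      have hstep : (((m i : ℕ) : ℝ) + 1)/L ≤ ((m' i : ℕ) : ℝ)/L :=
        (div_le_div_iff_of_pos_right hLpos).mpr hnat
      linarith
    have h2 : 0 < f q (wit m') := by
      rw [hfval, hvq]
      have hlb := ((hwit m' hm').2 i).1
      linarith
    have := congrFun hFmm q
    rw [hF] at this
    simp only at this
    rw [sign_neg h1, sign_pos h2] at this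
    exact absurd this (by decide)
  have hinj : Set.InjOn F {m | P m} := by
    intro m hm m' hm' hFmm
    by_contra hne
    obtain ⟨i, hi⟩ : ∃ i, m i ≠ m' i := by
      by_contra h
      push_neg at h
      exact hne (funext h)
    rcases Nat.lt_or_ge (m i : ℕ) (m' i : ℕ) with h | h
    · exact key m m' hm hm' hFmm i h
    · rcases Nat.lt_or_ge (m' i : ℕ) (m i : ℕ) with h' | h'
      · exact key m' m hm' hm hFmm.symm i h'
      · exact hi (Fin.ext (le_antisymm h' h))
  calc Set.ncard {m : Fin k → Fin L | P m}
      ≤ Set.ncard {σ : ι → SignType | ∃ v : E', ∀ q, SignType.sign (f q v) = σ q} := by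
        refine Set.ncard_le_ncard_of_injOn F ?_ hinj (Set.toFinite _)
        intro m _
        exact ⟨wit m, fun q => rfl⟩
    _ ≤ (2 * Fintype.card ι + 1) ^ d := signPattern_count' d E' hdim f
    _ = (2 * (k * W.card) + 1) ^ d := by rw [hcard]

lemma gridCubeF_eq (d L : ℕ) (j : Fin d → Fin L) :
    gridCubeF d L j = (MeasurableEquiv.toLp 2 (Fin d → ℝ)).symm ⁻¹'
      (Set.univ.pi fun i => Set.Ioo (((j i : ℕ) : ℝ)/L) ((((j i : ℕ) : ℝ)+1)/L)) := by
  ext z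
  rw [Set.mem_preimage, Set.mem_pi]
  simp only [Set.mem_univ, forall_true_left]
  exact Iff.rfl

lemma unitCube_eq (d : ℕ) :
    unitCube d = (MeasurableEquiv.toLp 2 (Fin d → ℝ)).symm ⁻¹'
      (Set.univ.pi fun _ => Set.Icc (0:ℝ) 1) := by
  ext z
  rw [Set.mem_preimage, Set.mem_pi]
  simp only [Set.mem_univ, forall_true_left]
  exact Iff.rfl

lemma volume_gridCubeF (d L : ℕ) (hL : 0 < L) (j : Fin d → Fin L) :
    volume (gridCubeF d L j) = (ENNReal.ofReal (1/(L:ℝ)))^d := by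
  rw [gridCubeF_eq]
  rw [(EuclideanSpace.volume_preserving_symm_measurableEquiv_toLp (Fin d)).measure_preimage
    (MeasurableSet.univ_pi fun i => measurableSet_Ioo).nullMeasurableSet]
  rw [volume_pi_pi]
  have : ∀ i : Fin d, volume (Set.Ioo (((j i : ℕ) : ℝ)/L) ((((j i : ℕ) : ℝ)+1)/L))
      = ENNReal.ofReal (1/(L:ℝ)) := by
    intro i
    rw [Real.volume_Ioo]
    congr 1
    have hLpos : (0:ℝ) < L := by exact_mod_cast hL
    field_simp
    ring
  simp only [this, Finset.prod_const, Finset.card_univ, Fintype.card_fin]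

lemma volume_unitCube (d : ℕ) : volume (unitCube d) = 1 := by
  rw [unitCube_eq]
  rw [(EuclideanSpace.volume_preserving_symm_measurableEquiv_toLp (Fin d)).measure_preimage
    (MeasurableSet.univ_pi fun i => measurableSet_Icc).nullMeasurableSet]
  rw [volume_pi_pi]
  simp [Real.volume_Icc]

lemma isOpen_gridCubeF (d L : ℕ) (j : Fin d → Fin L) : IsOpen (gridCubeF d L j) := by
  have : gridCubeF d L j = ⋂ i : Fin d, ((EuclideanSpace.proj i : EuclideanSpace ℝ (Fin d) →L[ℝ] ℝ) ⁻¹'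
      (Set.Ioo (((j i : ℕ) : ℝ)/L) ((((j i : ℕ) : ℝ)+1)/L))) := by
    ext z
    simp [gridCubeF, EuclideanSpace.proj, Set.mem_Ioo]
  rw [this]
  exact isOpen_iInter_of_finite fun i =>
    (EuclideanSpace.proj i).continuous.isOpen_preimage _ isOpen_Ioo

lemma measurableSet_unitCube (d : ℕ) : MeasurableSet (unitCube d) := by
  have : unitCube d = ⋂ i : Fin d, ((EuclideanSpace.proj i : EuclideanSpace ℝ (Fin d) →L[ℝ] ℝ) ⁻¹'
      (Set.Icc (0:ℝ) 1)) := by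
    ext z
    simp [unitCube, EuclideanSpace.proj]
  rw [this]
  exact MeasurableSet.iInter fun i =>
    ((EuclideanSpace.proj i).continuous.measurable) measurableSet_Icc

/-- measure of the cylinder event "all cubes in `s` are selected". -/
lemma bernoulli_cylinder (d L : ℕ) (p : ℝ) (hp : 0 ≤ p) (hp1 : p ≤ 1)
    (s : Finset (Fin d → Fin L)) :
    bernoulliProduct d L p hp hp1 {ω | ∀ j ∈ s, ω j = true}
      = (ENNReal.ofReal p) ^ s.card := by
  classical
  have hset : {ω : (Fin d → Fin L) → Bool | ∀ j ∈ s, ω j = true}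
      = Set.univ.pi (fun j => if j ∈ s then ({true} : Set Bool) else Set.univ) := by
    ext ω
    simp only [Set.mem_setOf_eq, Set.mem_pi, Set.mem_univ, forall_true_left]
    constructor
    · intro h j
      by_cases hj : j ∈ s
      · simp [hj, h j hj]
      · simp [hj]
    · intro h j hj
      have := h j
      simpa [hj] using this
  rw [bernoulliProduct, hset, Measure.pi_pi]
  have hν : ∀ j : Fin d → Fin L,
      ((PMF.bernoulli (Real.toNNReal p) (Real.toNNReal_le_one.mpr hp1)).toMeasure)
        (if j ∈ s then ({true} : Set Bool) else Set.univ)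
      = if j ∈ s then ENNReal.ofReal p else 1 := by
    intro j
    by_cases hj : j ∈ s
    · simp only [hj, if_true]
      rw [PMF.toMeasure_apply_singleton _ _ (measurableSet_singleton _)]
      simp [PMF.bernoulli_apply]
      rfl
    · simp only [hj, if_false]
      exact measure_univ
  simp only [hν]
  rw [← Finset.prod_sdiff (Finset.subset_univ s)]
  have h1 : ∏ j ∈ Finset.univ \ s, (if j ∈ s then ENNReal.ofReal p else 1) = 1 := by
    apply Finset.prod_eq_one
    intro j hj
    rw [Finset.mem_sdiff] at hj
    simp [hj.2]
  have h2 : ∏ j ∈ s, (if j ∈ s then ENNReal.ofReal p else 1) = (ENNReal.ofReal p) ^ s.card := by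
    rw [Finset.prod_congr rfl (fun j hj => if_pos hj), Finset.prod_const]
  rw [h1, h2, one_mul]

lemma gridCubeF_disjoint (d L : ℕ) {i j : Fin d → Fin L} (hij : i ≠ j) :
    Disjoint (gridCubeF d L i) (gridCubeF d L j) := by
  rw [Set.disjoint_left]
  intro z hzi hzj
  obtain ⟨c, hc⟩ : ∃ c, i c ≠ j c := by
    by_contra h
    push_neg at h
    exact hij (funext h)
  have hL : (0:ℝ) < L := by
    have := (i c).pos
    exact_mod_cast this
  have h1 := hzi c
  have h2 := hzj c
  rcases Nat.lt_or_ge (i c : ℕ) (j c : ℕ) with h | h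
  · have : ((i c : ℕ) : ℝ) + 1 ≤ ((j c : ℕ) : ℝ) := by exact_mod_cast h
    have hd : (((i c : ℕ) : ℝ) + 1)/L ≤ ((j c : ℕ) : ℝ)/L := by gcongr
    linarith [h1.2, h2.1]
  · have hlt : (j c : ℕ) < (i c : ℕ) :=
      lt_of_le_of_ne h (fun hh => hc (Fin.ext hh.symm))
    have : ((j c : ℕ) : ℝ) + 1 ≤ ((i c : ℕ) : ℝ) := by exact_mod_cast hlt
    have hd : (((j c : ℕ) : ℝ) + 1)/L ≤ ((i c : ℕ) : ℝ)/L := by gcongr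
    linarith [h1.1, h2.2]

lemma measurableSet_cylinder (d L : ℕ) (j : Fin d → Fin L) :
    MeasurableSet {ω : (Fin d → Fin L) → Bool | ω j = true} := by
  have : {ω : (Fin d → Fin L) → Bool | ω j = true} = (fun ω => ω j) ⁻¹' {true} := rfl
  rw [this]
  exact (measurable_pi_apply j) (measurableSet_singleton true)

lemma part1 (d L : ℕ) (hL : 0 < L) (p : ℝ) (hp : 0 ≤ p) (hp1 : p ≤ 1) :
    ∫⁻ ω, volume (randomSet d L ω) ∂(bernoulliProduct d L p hp hp1)
      = ENNReal.ofReal p := by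
  classical
  set c : ENNReal := (ENNReal.ofReal (1/(L:ℝ)))^d with hc
  have hvol : ∀ ω, volume (randomSet d L ω)
      = ∑ j : Fin d → Fin L,
          Set.indicator {ω' : (Fin d → Fin L) → Bool | ω' j = true} (fun _ => c) ω := by
    intro ω
    have hset : {j : Fin d → Fin L | ω j = true}
        = ↑(Finset.univ.filter (fun j => ω j = true)) := by
      ext j; simp
    rw [randomSet, hset, Finset.set_biUnion_coe,
      measure_biUnion_finset ?_ (fun b _ => (isOpen_gridCubeF d L b).measurableSet)]
    · rw [Finset.sum_congr rfl (fun j _ => volume_gridCubeF d L hL j)]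
      rw [Finset.sum_filter]
      apply Finset.sum_congr rfl
      intro j _
      rw [Set.indicator_apply]
      congr 1
    · intro a _ b _ hab
      exact gridCubeF_disjoint d L hab
  rw [lintegral_congr hvol]
  rw [lintegral_finset_sum _ (fun j _ =>
    (measurable_const.indicator (measurableSet_cylinder d L j)))]
  have hterm : ∀ j : Fin d → Fin L,
      ∫⁻ ω, Set.indicator {ω' : (Fin d → Fin L) → Bool | ω' j = true} (fun _ => c) ω
        ∂(bernoulliProduct d L p hp hp1) = c * ENNReal.ofReal p := by
    intro j
    rw [lintegral_indicator_const (measurableSet_cylinder d L j)]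
    have : {ω' : (Fin d → Fin L) → Bool | ω' j = true}
        = {ω' | ∀ j' ∈ ({j} : Finset (Fin d → Fin L)), ω' j' = true} := by
      ext ω'; simp
    rw [this, bernoulli_cylinder, Finset.card_singleton, pow_one]
  rw [Finset.sum_congr rfl (fun j _ => hterm j), Finset.sum_const, Finset.card_univ,
    Fintype.card_fun, Fintype.card_fin, Fintype.card_fin, nsmul_eq_mul]
  rw [hc, ← mul_assoc]
  have : ((L^d : ℕ) : ENNReal) * (ENNReal.ofReal (1/(L:ℝ)))^d = 1 := by
    push_cast
    rw [← mul_pow, ← ENNReal.ofReal_natCast L, ← ENNReal.ofReal_mul (by positivity)]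
    have hL' : (L:ℝ) ≠ 0 := by positivity
    rw [mul_one_div, div_self hL']
    simp
  rw [this, one_mul]

/-- The set of translations realizing a given cube-assignment pattern. -/
def Zset (d L k : ℕ) (α : ℝ) (x : Fin k → EuclideanSpace ℝ (Fin d))
    (π : Fin k → Fin d → Fin L) : Set (EuclideanSpace ℝ (Fin d)) :=
  unitCube d ∩ {z | ∃ T : EuclideanSpace ℝ (Fin d) →ₗ[ℝ] EuclideanSpace ℝ (Fin d),
    (∀ u, α * ‖u‖ ≤ ‖T u‖ ∧ ‖T u‖ ≤ α⁻¹ * ‖u‖) ∧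
    ∀ i, T (x i) + z ∈ gridCubeF d L (π i)}

lemma measurableSet_Zset (d L k : ℕ) (α : ℝ) (x : Fin k → EuclideanSpace ℝ (Fin d))
    (π : Fin k → Fin d → Fin L) : MeasurableSet (Zset d L k α x π) := by
  apply (measurableSet_unitCube d).inter
  have : {z : EuclideanSpace ℝ (Fin d) |
      ∃ T : EuclideanSpace ℝ (Fin d) →ₗ[ℝ] EuclideanSpace ℝ (Fin d),
      (∀ u, α * ‖u‖ ≤ ‖T u‖ ∧ ‖T u‖ ≤ α⁻¹ * ‖u‖) ∧
      ∀ i, T (x i) + z ∈ gridCubeF d L (π i)}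
      = ⋃ T : {T : EuclideanSpace ℝ (Fin d) →ₗ[ℝ] EuclideanSpace ℝ (Fin d) //
          ∀ u, α * ‖u‖ ≤ ‖T u‖ ∧ ‖T u‖ ≤ α⁻¹ * ‖u‖},
          ⋂ i : Fin k, (fun z => T.1 (x i) + z) ⁻¹' gridCubeF d L (π i) := by
    ext z
    simp only [Set.mem_setOf_eq, Set.mem_iUnion, Set.mem_iInter, Set.mem_preimage, Subtype.exists]
    constructor
    · rintro ⟨T, hT, hc⟩; exact ⟨T, hT, hc⟩
    · rintro ⟨T, hT, hc⟩; exact ⟨T, hT, hc⟩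
  rw [this]
  apply IsOpen.measurableSet
  apply isOpen_iUnion
  intro T
  apply isOpen_iInter_of_finite
  intro i
  exact (isOpen_gridCubeF d L (π i)).preimage (by continuity)

lemma Zset_subset_unitCube (d L k : ℕ) (α : ℝ) (x : Fin k → EuclideanSpace ℝ (Fin d))
    (π : Fin k → Fin d → Fin L) : Zset d L k α x π ⊆ unitCube d :=
  Set.inter_subset_left

/-- If some translation realizes the pattern, all assigned cubes are distinct. -/
lemma Zset_nonempty_inj (d L k : ℕ) (hd : 1 ≤ d) (hL : 0 < L) (α : ℝ) (hα : 0 < α)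
    (x : Fin k → EuclideanSpace ℝ (Fin d))
    (hsep : ∀ i j : Fin k, i ≠ j → Real.sqrt d / L ≤ α * ‖x i - x j‖)
    (π : Fin k → Fin d → Fin L) (hne : (Zset d L k α x π).Nonempty) :
    Function.Injective π := by
  obtain ⟨z, -, T, hT, hc⟩ := hne
  intro i j hij
  by_contra hne'
  replace hne' : i ≠ j := hne'
  have hLpos : (0:ℝ) < L := by exact_mod_cast hL
  set v := T (x i) - T (x j) with hv
  have hcoord : ∀ c : Fin d, |v c| < 1/L := by
    intro c
    have h1 := (hc i) c
    have h2 := (hc j) c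
    rw [hij] at h1
    have hvc : v c = (T (x i) + z) c - (T (x j) + z) c := by
      simp [hv]
    rw [hvc, abs_lt]
    have hgap : ((((π j c : ℕ) : ℝ)) + 1)/L = (((π j c : ℕ) : ℝ))/L + 1/L := by ring
    constructor
    · linarith [h1.1, h1.2, h2.1, h2.2]
    · linarith [h1.1, h1.2, h2.1, h2.2]
  have hnorm : ‖v‖ < Real.sqrt d / L := by
    rw [EuclideanSpace.norm_eq]
    have hsum : ∑ c : Fin d, ‖v c‖^2 < (d:ℝ) * (1/L)^2 := by
      have : ∀ c : Fin d, ‖v c‖^2 < (1/L)^2 := by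
        intro c
        have h := hcoord c
        have : ‖v c‖ = |v c| := Real.norm_eq_abs _
        rw [this]
        have h0 : (0:ℝ) ≤ |v c| := abs_nonneg _
        nlinarith
      calc ∑ c : Fin d, ‖v c‖^2 < ∑ c : Fin d, (1/(L:ℝ))^2 := by
            apply Finset.sum_lt_sum_of_nonempty
            · exact Finset.univ_nonempty_iff.mpr (by
                have : 0 < d := hd
                exact ⟨⟨0, this⟩⟩)
            · intro c _; exact this c
        _ = (d:ℝ) * (1/L)^2 := by
            rw [Finset.sum_const, Finset.card_univ, Fintype.card_fin, nsmul_eq_mul]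
    calc Real.sqrt (∑ c : Fin d, ‖v c‖^2) < Real.sqrt ((d:ℝ) * (1/L)^2) := by
          apply Real.sqrt_lt_sqrt
          · positivity
          · exact hsum
      _ = Real.sqrt d / L := by
          rw [Real.sqrt_mul (by positivity), Real.sqrt_sq (by positivity)]
          rw [mul_one_div]
  have hTv : α * ‖x i - x j‖ ≤ ‖v‖ := by
    have := (hT (x i - x j)).1
    have hveq : T (x i - x j) = v := by rw [map_sub]
    rwa [hveq] at this
  have := hsep i j hne'
  linarith

lemma memS_bounds' (d : ℕ) (α : ℝ) (hα : 0 < α)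
    (T : EuclideanSpace ℝ (Fin d) ≃ₗ[ℝ] EuclideanSpace ℝ (Fin d)) (h : memS α (1/α) T) :
    ∀ u : EuclideanSpace ℝ (Fin d),
      α * ‖u‖ ≤ ‖(T : EuclideanSpace ℝ (Fin d) →ₗ[ℝ] EuclideanSpace ℝ (Fin d)) u‖ ∧
      ‖(T : EuclideanSpace ℝ (Fin d) →ₗ[ℝ] EuclideanSpace ℝ (Fin d)) u‖ ≤ α⁻¹ * ‖u‖ := by
  set T' : EuclideanSpace ℝ (Fin d) →ₗ[ℝ] EuclideanSpace ℝ (Fin d) := (T : EuclideanSpace ℝ (Fin d) →ₗ[ℝ] EuclideanSpace ℝ (Fin d)) with hT'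
  set S := {s : ℝ | ∃ u : EuclideanSpace ℝ (Fin d), ‖u‖ = 1 ∧ ‖T' u‖ = s} with hSdef
  have hbdd_below : BddBelow S := ⟨0, fun s ⟨u, _, hs⟩ => hs ▸ norm_nonneg _⟩
  have hbdd_above : BddAbove S := by
    set Tc := LinearMap.toContinuousLinearMap T' with hTc
    refine ⟨‖Tc‖, fun s ⟨u, hu1, hs⟩ => ?_⟩
    have : ‖T' u‖ = ‖Tc u‖ := rfl
    rw [← hs, this]
    calc ‖Tc u‖ ≤ ‖Tc‖ * ‖u‖ := Tc.le_opNorm u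
      _ = ‖Tc‖ := by rw [hu1, mul_one]
  intro u
  by_cases hu : u = 0
  · simp [hu]
  · have hnu : (0:ℝ) < ‖u‖ := norm_pos_iff.mpr hu
    set w : EuclideanSpace ℝ (Fin d) := ‖u‖⁻¹ • u with hw
    have hw1 : ‖w‖ = 1 := by
      rw [hw, norm_smul, norm_inv, norm_norm, inv_mul_cancel₀ (ne_of_gt hnu)]
    have hTw : ‖T' w‖ = ‖u‖⁻¹ * ‖T' u‖ := by
      rw [hw, LinearMap.map_smul, norm_smul, norm_inv, norm_norm]
    have hmem : ‖T' w‖ ∈ S := ⟨w, hw1, rfl⟩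
    have hlow : opMin T' ≤ ‖T' w‖ := csInf_le hbdd_below hmem
    have hhigh : ‖T' w‖ ≤ opMax T' := le_csSup hbdd_above hmem
    have h1 : α < ‖u‖⁻¹ * ‖T' u‖ := by
      calc α < opMin T' := h.1
        _ ≤ ‖T' w‖ := hlow
        _ = ‖u‖⁻¹ * ‖T' u‖ := hTw
    have h2 : ‖u‖⁻¹ * ‖T' u‖ < α⁻¹ := by
      calc ‖u‖⁻¹ * ‖T' u‖ = ‖T' w‖ := hTw.symm
        _ ≤ opMax T' := hhigh
        _ < 1/α := h.2
        _ = α⁻¹ := one_div α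
    constructor
    · have := mul_lt_mul_of_pos_left h1 hnu
      rw [← mul_assoc, mul_inv_cancel₀ (ne_of_gt hnu), one_mul] at this
      linarith [this]
    · have := mul_lt_mul_of_pos_left h2 hnu
      rw [← mul_assoc, mul_inv_cancel₀ (ne_of_gt hnu), one_mul] at this
      nlinarith [this, hnu]

/-- Coordinates are bounded by the Euclidean norm. -/
lemma abs_coord_le_norm {d : ℕ} (y : EuclideanSpace ℝ (Fin d)) (c : Fin d) :
    |y c| ≤ ‖y‖ := by
  rw [EuclideanSpace.norm_eq]
  have h1 : |y c| = Real.sqrt (‖y c‖^2) := by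
    rw [Real.sqrt_sq_eq_abs, Real.norm_eq_abs, abs_abs]
  rw [h1]
  apply Real.sqrt_le_sqrt
  apply Finset.single_le_sum (f := fun i => ‖y i‖^2) (fun i _ => by positivity)
    (Finset.mem_univ c)

set_option maxHeartbeats 1000000 in
/-- The number of patterns realizable at a fixed point `z`. -/
lemma Zcount (d L k : ℕ) (hd : 1 ≤ d) (hL : 0 < L) (α M : ℝ) (hα : 0 < α) (hM : 0 < M)
    (hLM : 1/2 ≤ (L:ℝ) * M) (hk : 2 ≤ k)
    (x : Fin k → EuclideanSpace ℝ (Fin d)) (hxM : ∀ i, ‖x i‖ ≤ M)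
    (z : EuclideanSpace ℝ (Fin d)) :
    letI : DecidablePred (fun π : Fin k → Fin d → Fin L => z ∈ Zset d L k α x π) :=
      Classical.decPred _
    ((Finset.univ.filter (fun π : Fin k → Fin d → Fin L => z ∈ Zset d L k α x π)).card : ℝ)
      ≤ ((4/α + 13) * ((k:ℝ) * L * M)) ^ (d * d) := by
  classical
  have hLpos : (0:ℝ) < L := by exact_mod_cast hL
  have hkpos : (0:ℝ) < k := by positivity
  set B : ℝ := α⁻¹ * M with hB
  have hBpos : 0 < B := by positivity
  -- row realizability predicates and windows
  set P : Fin d → (Fin k → Fin L) → Prop := fun c m =>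
    ∃ φ : EuclideanSpace ℝ (Fin d) →ₗ[ℝ] ℝ,
      (∀ i, |φ (x i)| ≤ B) ∧
      ∀ i, ((m i : ℕ) : ℝ)/L < φ (x i) + z c ∧ φ (x i) + z c < (((m i : ℕ) : ℝ)+1)/L
    with hPdef
  set W : Fin d → Finset (Fin (L+1)) := fun c =>
    Finset.univ.filter (fun t : Fin (L+1) => |(t : ℝ)/L - z c| ≤ B + 1/L) with hWdef
  -- step 1: injection into the product of row-pattern sets
  have hstep1 : (Finset.univ.filter
        (fun π : Fin k → Fin d → Fin L => z ∈ Zset d L k α x π)).card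
      ≤ (Fintype.piFinset (fun c : Fin d => Finset.univ.filter (P c))).card := by
    refine Finset.card_le_card_of_injOn (fun π => fun c i => π i c) ?_ ?_
    · intro π hπ
      rw [Finset.mem_coe, Finset.mem_filter] at hπ
      obtain ⟨-, -, T, hT, hc⟩ := hπ
      rw [Finset.mem_coe, Fintype.mem_piFinset]
      intro c
      rw [Finset.mem_filter]
      refine ⟨Finset.mem_univ _, ?_⟩
      refine ⟨(EuclideanSpace.proj c).toLinearMap.comp T, ?_, ?_⟩
      · intro i
        have h1 : |((EuclideanSpace.proj c).toLinearMap.comp T) (x i)| = |(T (x i)) c| := rfl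
        rw [h1]
        calc |(T (x i)) c| ≤ ‖T (x i)‖ := abs_coord_le_norm _ c
          _ ≤ α⁻¹ * ‖x i‖ := (hT (x i)).2
          _ ≤ α⁻¹ * M := by
              apply mul_le_mul_of_nonneg_left (hxM i) (by positivity)
      · intro i
        have h2 := (hc i) c
        have h3 : ((EuclideanSpace.proj c).toLinearMap.comp T) (x i) + z c
            = (T (x i) + z) c := by
          simp [EuclideanSpace.proj]
        rw [h3]
        exact h2
    · intro π _ π' _ h
      funext i c
      exact congrFun (congrFun h c) i
  -- step 2: per-row count
  have hstep2 : ∀ c : Fin d, ((Finset.univ.filter (P c)).card : ℝ)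
      ≤ ((4/α + 13) * ((k:ℝ) * L * M)) ^ d := by
    intro c
    have hWsuff : ∀ m, P c m → ∀ i, Fin.castSucc (m i) ∈ W c := by
      intro m ⟨φ, hφB, hφ⟩ i
      rw [hWdef]
      simp only [Finset.mem_filter, Finset.mem_univ, true_and]
      have h1 := (hφ i).1
      have h2 := (hφ i).2
      have hcast : ((Fin.castSucc (m i) : Fin (L+1)) : ℝ) = ((m i : ℕ) : ℝ) := by
        simp [Fin.coe_castSucc]
      rw [hcast]
      have hgap : ((((m i : ℕ)) : ℝ) + 1)/L = (((m i : ℕ)) : ℝ)/L + 1/L := by ring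
      have hφb := hφB i
      rw [abs_le] at hφb ⊢
      constructor
      · linarith [hφb.1, hφb.2]
      · linarith [hφb.1, hφb.2]
    have hcount := rowPattern_count d L k hL x B (z c) (W c) (P c) (fun m => Iff.rfl) hWsuff
    have hncard : ((Finset.univ.filter (P c)).card) = Set.ncard {m : Fin k → Fin L | P c m} := by
      rw [← Set.ncard_coe_finset]
      congr 1
      ext m
      simp
    have hWc : ((W c).card : ℝ) ≤ 2*L*B + 3 := window_card L hL B (z c) hBpos.le
    have hbase : ((2 * (k * (W c).card) + 1 : ℕ) : ℝ) ≤ (4/α + 13) * ((k:ℝ) * L * M) := by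
      push_cast
      have hexpand : (4/α + 13) * ((k:ℝ) * L * M) = (k:ℝ) * (4 * (L*M)/α) + 13 * ((k:ℝ)*(L*M)) := by
        field_simp
      have ha : 2 * ((k:ℝ) * (W c).card) ≤ 2 * ((k:ℝ) * (2*L*B + 3)) := by
        have := mul_le_mul_of_nonneg_left hWc (le_of_lt hkpos)
        linarith
      have hb : 2 * ((k:ℝ) * (2*L*B+3)) = (k:ℝ) * (4*(L*M)/α) + 6 * (k:ℝ) := by
        rw [hB]
        field_simp
        ring
      have hc' : 6 * (k:ℝ) + 1 ≤ 13 * ((k:ℝ)*(L*M)) := by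
        have hk2 : (2:ℝ) ≤ k := by exact_mod_cast hk
        nlinarith [hLM, hk2]
      calc 2 * ((k:ℝ) * (W c).card) + 1 ≤ (k:ℝ) * (4*(L*M)/α) + 6 * (k:ℝ) + 1 := by
            rw [← hb]; linarith
        _ ≤ (k:ℝ) * (4*(L*M)/α) + 13 * ((k:ℝ)*(L*M)) := by linarith
        _ = (4/α + 13) * ((k:ℝ) * L * M) := hexpand.symm
    calc ((Finset.univ.filter (P c)).card : ℝ)
        = ((Set.ncard {m : Fin k → Fin L | P c m} : ℕ) : ℝ) := by rw [hncard]
      _ ≤ (((2 * (k * (W c).card) + 1) ^ d : ℕ) : ℝ) := by exact_mod_cast hcount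
      _ = (((2 * (k * (W c).card) + 1 : ℕ) : ℝ)) ^ d := by push_cast; ring
      _ ≤ ((4/α + 13) * ((k:ℝ) * L * M)) ^ d := by
          exact pow_le_pow_left₀ (Nat.cast_nonneg _) hbase d
  -- assemble
  calc ((Finset.univ.filter
        (fun π : Fin k → Fin d → Fin L => z ∈ Zset d L k α x π)).card : ℝ)
      ≤ ((Fintype.piFinset (fun c : Fin d => Finset.univ.filter (P c))).card : ℝ) := by
        exact_mod_cast hstep1
    _ = ∏ c : Fin d, ((Finset.univ.filter (P c)).card : ℝ) := by
        rw [Fintype.card_piFinset]; push_cast; ring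
    _ ≤ ∏ c : Fin d, ((4/α + 13) * ((k:ℝ) * L * M)) ^ d := by
        apply Finset.prod_le_prod
        · intro c _; exact Nat.cast_nonneg _
        · intro c _; exact hstep2 c
    _ = (((4/α + 13) * ((k:ℝ) * L * M)) ^ d) ^ d := by
        rw [Finset.prod_const, Finset.card_univ, Fintype.card_fin]
    _ = ((4/α + 13) * ((k:ℝ) * L * M)) ^ (d * d) := by rw [← pow_mul]

end Aux

set_option maxHeartbeats 1000000 in
/-- **Expectation bounds** (Lemma 3.2, for a single finite set).
There is a constant `C = C(α, d) > 0` such that: with `A₀ = {x_1, …, x_k}`,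
`M = max ‖x_i‖`, `δ = δ(A₀)`, `L = ⌈d/(αMδ)⌉`, and the random set `E(ω)` chosen by
keeping each grid cube independently with probability `p`,
one has `E(μ(E(ω))) = p` and `E(μ(V(ω))) ≤ C (L M k)^{d²} p^k`, where `V(ω)` is the
set of `x ∈ [0,1]^d` such that `T A₀ + x ⊆ E(ω)` for some `T ∈ S_α^{1/α}`. -/
theorem stmt10 (d : ℕ) (hd : 1 ≤ d) (α : ℝ) (hα0 : 0 < α) (hα1 : α < 1) :
    ∃ C : ℝ, 0 < C ∧
      ∀ (k : ℕ), 2 ≤ k →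
      ∀ x : Fin k → EuclideanSpace ℝ (Fin d), Function.Injective x →
        (∀ i, x i ≠ 0) →
      ∀ M : ℝ, M = sSup {s : ℝ | ∃ i, ‖x i‖ = s} →
      ∀ δ : ℝ, δ = delta (Set.range x) →
      ∀ L : ℕ, L = ⌈d / (α * M * δ)⌉₊ →
      ∀ p : ℝ, ∀ hp : 0 < p, ∀ hp1 : p < 1,
      (∫⁻ ω, volume (randomSet d L ω) ∂(bernoulliProduct d L p hp.le hp1.le)) =
          ENNReal.ofReal p ∧
      (∫⁻ ω, volume {z : EuclideanSpace ℝ (Fin d) | z ∈ unitCube d ∧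
            ∃ T : EuclideanSpace ℝ (Fin d) ≃ₗ[ℝ] EuclideanSpace ℝ (Fin d),
              memS α (1 / α) T ∧ (fun a => T a + z) '' Set.range x ⊆ randomSet d L ω}
          ∂(bernoulliProduct d L p hp.le hp1.le)) ≤
        ENNReal.ofReal (C * ((L : ℝ) * M * (k : ℝ)) ^ (d ^ 2) * p ^ k) := by
  classical
  refine ⟨(4/α + 13) ^ (d * d), by positivity, ?_⟩
  intro k hk x hxinj hx0 M hM δ hδ L hL p hp hp1
  -- basic facts about M
  have hSnorm_fin : ({s : ℝ | ∃ i, ‖x i‖ = s}).Finite := by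
    have : {s : ℝ | ∃ i, ‖x i‖ = s} = Set.range (fun i => ‖x i‖) := by
      ext s; simp [eq_comm]
    rw [this]; exact Set.finite_range _
  have hk0 : 0 < k := by omega
  have hSnorm_ne : ({s : ℝ | ∃ i, ‖x i‖ = s}).Nonempty := ⟨‖x ⟨0, hk0⟩‖, ⟨0, hk0⟩, rfl⟩
  have hM0 : 0 < M := by
    have hmem : M ∈ {s : ℝ | ∃ i, ‖x i‖ = s} := hM ▸ hSnorm_ne.csSup_mem hSnorm_fin
    obtain ⟨i, hi⟩ := hmem
    rw [← hi]
    exact norm_pos_iff.mpr (hx0 i)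
  have hMax : ∀ i, ‖x i‖ ≤ M := by
    intro i
    rw [hM]
    exact le_csSup (hSnorm_fin.bddAbove) ⟨i, rfl⟩
  -- minimum distance
  set D : Set ℝ := {s : ℝ | ∃ a ∈ Set.range x, ∃ b ∈ Set.range x, a ≠ b ∧ ‖a - b‖ = s}
    with hD
  have hDfin : D.Finite := by
    have hsub : D ⊆ (fun q : (Fin k) × (Fin k) => ‖x q.1 - x q.2‖) '' Set.univ := by
      rintro s ⟨a, ⟨i, rfl⟩, b, ⟨j, rfl⟩, hab, rfl⟩
      exact ⟨(i, j), Set.mem_univ _, rfl⟩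
    exact Set.Finite.subset (Set.toFinite _) hsub
  have h01 : (⟨0, by omega⟩ : Fin k) ≠ (⟨1, by omega⟩ : Fin k) := by
    intro h
    simpa using congrArg Fin.val h
  have hDne : D.Nonempty :=
    ⟨‖x ⟨0, by omega⟩ - x ⟨1, by omega⟩‖,
      x ⟨0, by omega⟩, ⟨_, rfl⟩, x ⟨1, by omega⟩, ⟨_, rfl⟩,
      fun h => h01 (hxinj h), rfl⟩
  set md : ℝ := sInf D with hmd
  have hmd_mem : md ∈ D := hDne.csInf_mem hDfin
  have hmd0 : 0 < md := by
    obtain ⟨a, -, b, -, hab, hs⟩ := hmd_mem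
    rw [← hs]
    exact norm_pos_iff.mpr (sub_ne_zero.mpr hab)
  have hmd_le : ∀ i j : Fin k, i ≠ j → md ≤ ‖x i - x j‖ := by
    intro i j hij
    apply csInf_le hDfin.bddBelow
    exact ⟨x i, ⟨i, rfl⟩, x j, ⟨j, rfl⟩, fun h => hij (hxinj h), rfl⟩
  -- δ = md / M
  have hden : sSup {s : ℝ | ∃ z ∈ Set.range x, ‖z‖ = s} = M := by
    rw [hM]
    congr 1
    ext s
    constructor
    · rintro ⟨z, ⟨i, rfl⟩, rfl⟩; exact ⟨i, rfl⟩
    · rintro ⟨i, rfl⟩; exact ⟨x i, ⟨i, rfl⟩, rfl⟩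
  have hδval : δ = md / M := by
    rw [hδ]
    show sInf {s : ℝ | ∃ a ∈ Set.range x, ∃ b ∈ Set.range x, a ≠ b ∧ ‖a - b‖ = s} /
        sSup {s : ℝ | ∃ z ∈ Set.range x, ‖z‖ = s} = md / M
    rw [hden, hmd, hD]
  have hδ0 : 0 < δ := by rw [hδval]; positivity
  have hMδ : M * δ = md := by
    rw [hδval]
    field_simp
  have hδ2 : δ ≤ 2 := by
    have h2M : md ≤ 2 * M := by
      have := hmd_le ⟨0, by omega⟩ ⟨1, by omega⟩ h01
      have hn : ‖x ⟨0, by omega⟩ - x ⟨1, by omega⟩‖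
          ≤ ‖x ⟨0, by omega⟩‖ + ‖x ⟨1, by omega⟩‖ := norm_sub_le _ _
      have h1 := hMax ⟨0, by omega⟩
      have h2 := hMax ⟨1, by omega⟩
      linarith
    rw [hδval, div_le_iff₀ hM0]
    linarith
  -- facts about L
  have hq0 : 0 < (d:ℝ) / (α * M * δ) := by
    have hd0 : (0:ℝ) < d := by exact_mod_cast hd
    positivity
  have hL0 : 0 < L := by
    rw [hL]
    exact Nat.ceil_pos.mpr hq0
  have hLpos : (0:ℝ) < L := by exact_mod_cast hL0
  have hLq : (d:ℝ) / (α * M * δ) ≤ L := by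
    rw [hL]; exact Nat.le_ceil _
  have hd0 : (0:ℝ) < d := by exact_mod_cast hd
  have hd1 : (1:ℝ) ≤ d := by exact_mod_cast hd
  have hLmd : (d:ℝ) ≤ L * (α * md) := by
    have h2 : (d:ℝ) ≤ L * (α * M * δ) := (div_le_iff₀ (by positivity)).mp hLq
    have h3 : (L:ℝ) * (α * M * δ) = L * (α * md) := by rw [← hMδ]; ring
    rwa [h3] at h2
  have hLM : 1/2 ≤ (L:ℝ) * M := by
    -- L M ≥ d/(α δ) ≥ d/2 ≥ 1/2
    have h1 : (d:ℝ) / (α * M * δ) * M = d / (α * δ) := by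
      field_simp
    have h2 : (d:ℝ) / (α * δ) ≤ L * M := by
      rw [← h1]
      exact mul_le_mul_of_nonneg_right hLq hM0.le
    have h3 : α * δ ≤ 2 := by nlinarith
    have h4 : (d:ℝ)/2 ≤ d / (α * δ) := by
      apply div_le_div_of_nonneg_left hd0.le (by positivity) h3
    linarith
  -- separation
  have hsep : ∀ i j : Fin k, i ≠ j → Real.sqrt d / L ≤ α * ‖x i - x j‖ := by
    intro i j hij
    have hsq : Real.sqrt d ≤ d := by
      have h := Real.sqrt_le_sqrt (by nlinarith : (d:ℝ) ≤ (d:ℝ)^2)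
      rwa [Real.sqrt_sq hd0.le] at h
    have h1 : (d:ℝ)/L ≤ α * md := by
      rw [div_le_iff₀ hLpos]
      linarith [hLmd]
    have h2 : α * md ≤ α * ‖x i - x j‖ :=
      mul_le_mul_of_nonneg_left (hmd_le i j hij) hα0.le
    calc Real.sqrt d / L ≤ (d:ℝ)/L := by gcongr
      _ ≤ α * md := h1
      _ ≤ α * ‖x i - x j‖ := h2
  refine ⟨part1 d L hL0 p hp.le hp1.le, ?_⟩
  -- PART 2
  set μ := bernoulliProduct d L p hp.le hp1.le with hμ
  set Vset : ((Fin d → Fin L) → Bool) → Set (EuclideanSpace ℝ (Fin d)) := fun ω =>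
    {z : EuclideanSpace ℝ (Fin d) | z ∈ unitCube d ∧
      ∃ T : EuclideanSpace ℝ (Fin d) ≃ₗ[ℝ] EuclideanSpace ℝ (Fin d),
        memS α (1 / α) T ∧ (fun a => T a + z) '' Set.range x ⊆ randomSet d L ω} with hVset
  set Nr : ℝ := ((4/α + 13) * ((k:ℝ) * L * M)) ^ (d * d) with hNr
  -- pointwise domination
  have hVsub : ∀ ω, Vset ω ⊆
      ⋃ π ∈ Finset.univ.filter (fun π : Fin k → Fin d → Fin L => ∀ i, ω (π i) = true),
        Zset d L k α x π := by
    intro ω z hz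
    obtain ⟨hcube, T, hmemS, himg⟩ := hz
    have hbounds := memS_bounds' d α hα0 T hmemS
    have hch : ∀ i : Fin k, ∃ j, ω j = true ∧
        (T : EuclideanSpace ℝ (Fin d) →ₗ[ℝ] EuclideanSpace ℝ (Fin d)) (x i) + z
          ∈ gridCubeF d L j := by
      intro i
      have hmem : (fun a => T a + z) (x i) ∈ randomSet d L ω :=
        himg ⟨x i, ⟨i, rfl⟩, rfl⟩
      simpa [randomSet, Set.mem_iUnion] using hmem
    choose π hπ1 hπ2 using hch
    have hπmem : π ∈ Finset.univ.filter
        (fun π : Fin k → Fin d → Fin L => ∀ i, ω (π i) = true) :=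
      Finset.mem_filter.mpr ⟨Finset.mem_univ _, hπ1⟩
    exact Set.mem_biUnion (Finset.mem_coe.mpr hπmem)
      ⟨hcube, (T : EuclideanSpace ℝ (Fin d) →ₗ[ℝ] EuclideanSpace ℝ (Fin d)),
        hbounds, hπ2⟩
  have hpoint : ∀ ω, volume (Vset ω) ≤
      ∑ π : Fin k → Fin d → Fin L,
        Set.indicator {ω' : (Fin d → Fin L) → Bool | ∀ i, ω' (π i) = true}
          (fun _ => volume (Zset d L k α x π)) ω := by
    intro ω
    calc volume (Vset ω)
        ≤ volume (⋃ π ∈ Finset.univ.filter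
            (fun π : Fin k → Fin d → Fin L => ∀ i, ω (π i) = true), Zset d L k α x π) :=
          measure_mono (hVsub ω)
      _ ≤ ∑ π ∈ Finset.univ.filter
            (fun π : Fin k → Fin d → Fin L => ∀ i, ω (π i) = true),
            volume (Zset d L k α x π) := measure_biUnion_finset_le _ _
      _ = ∑ π : Fin k → Fin d → Fin L,
            Set.indicator {ω' : (Fin d → Fin L) → Bool | ∀ i, ω' (π i) = true}
              (fun _ => volume (Zset d L k α x π)) ω := by
          rw [Finset.sum_filter]
          apply Finset.sum_congr rfl
          intro π _
          by_cases h : ∀ i, ω (π i) = true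
          · rw [if_pos h, Set.indicator_of_mem
              (show ω ∈ {ω' : (Fin d → Fin L) → Bool | ∀ i, ω' (π i) = true} from h)]
          · rw [if_neg h, Set.indicator_of_notMem
              (show ω ∉ {ω' : (Fin d → Fin L) → Bool | ∀ i, ω' (π i) = true} from h)]
  have hcylmeas : ∀ π : Fin k → Fin d → Fin L,
      MeasurableSet {ω' : (Fin d → Fin L) → Bool | ∀ i, ω' (π i) = true} := by
    intro π
    have : {ω' : (Fin d → Fin L) → Bool | ∀ i, ω' (π i) = true}
        = ⋂ i : Fin k, (fun ω' : (Fin d → Fin L) → Bool => ω' (π i)) ⁻¹' {true} := by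
      ext ω'; simp
    rw [this]
    exact MeasurableSet.iInter fun i =>
      (measurable_pi_apply (π i)) (measurableSet_singleton true)
  have hterm : ∀ π : Fin k → Fin d → Fin L,
      volume (Zset d L k α x π) * μ {ω' | ∀ i, ω' (π i) = true}
        ≤ volume (Zset d L k α x π) * (ENNReal.ofReal p) ^ k := by
    intro π
    by_cases hZ : Zset d L k α x π = ∅
    · rw [hZ, measure_empty, zero_mul, zero_mul]
    · have hinj : Function.Injective π :=
        Zset_nonempty_inj d L k hd hL0 α hα0 x hsep π (Set.nonempty_iff_ne_empty.mpr hZ)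
      have hcyl : μ {ω' | ∀ i, ω' (π i) = true} = (ENNReal.ofReal p) ^ k := by
        have hseteq : {ω' : (Fin d → Fin L) → Bool | ∀ i, ω' (π i) = true}
            = {ω' | ∀ j ∈ Finset.image π Finset.univ, ω' j = true} := by
          ext ω'
          simp only [Set.mem_setOf_eq, Finset.mem_image]
          constructor
          · rintro h j ⟨i, -, rfl⟩; exact h i
          · intro h i; exact h (π i) ⟨i, Finset.mem_univ i, rfl⟩
        rw [hμ, hseteq, bernoulli_cylinder,
          Finset.card_image_of_injective _ hinj, Finset.card_univ, Fintype.card_fin]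
      rw [hcyl]
  have hsumZ : ∑ π : Fin k → Fin d → Fin L, volume (Zset d L k α x π)
      ≤ ENNReal.ofReal Nr := by
    have hZie : ∀ π : Fin k → Fin d → Fin L, volume (Zset d L k α x π)
        = ∫⁻ z, Set.indicator (Zset d L k α x π) (fun _ => (1:ENNReal)) z := by
      intro π
      rw [lintegral_indicator_const (measurableSet_Zset d L k α x π), one_mul]
    calc ∑ π : Fin k → Fin d → Fin L, volume (Zset d L k α x π)
        = ∫⁻ z, ∑ π : Fin k → Fin d → Fin L,
            Set.indicator (Zset d L k α x π) (fun _ => (1:ENNReal)) z := by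
          rw [lintegral_finset_sum _ (fun π _ =>
            measurable_const.indicator (measurableSet_Zset d L k α x π))]
          exact Finset.sum_congr rfl fun π _ => hZie π
      _ ≤ ∫⁻ z, Set.indicator (unitCube d) (fun _ => ENNReal.ofReal Nr) z := by
          apply lintegral_mono
          intro z
          show ∑ π : Fin k → Fin d → Fin L,
              Set.indicator (Zset d L k α x π) (fun _ => (1:ENNReal)) z
            ≤ Set.indicator (unitCube d) (fun _ => ENNReal.ofReal Nr) z
          by_cases hz : z ∈ unitCube d
          · rw [Set.indicator_of_mem hz]
            have hcard : ∑ π : Fin k → Fin d → Fin L,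
                Set.indicator (Zset d L k α x π) (fun _ => (1:ENNReal)) z
                = ((Finset.univ.filter
                    (fun π : Fin k → Fin d → Fin L => z ∈ Zset d L k α x π)).card
                    : ENNReal) := by
              have heq : ∑ π : Fin k → Fin d → Fin L,
                  Set.indicator (Zset d L k α x π) (fun _ => (1:ENNReal)) z
                  = ∑ π : Fin k → Fin d → Fin L,
                    (if z ∈ Zset d L k α x π then (1:ENNReal) else 0) := by
                apply Finset.sum_congr rfl
                intro π _
                by_cases h : z ∈ Zset d L k α x π
                · rw [Set.indicator_of_mem h, if_pos h]
                · rw [Set.indicator_of_notMem h, if_neg h]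
              rw [heq, Finset.sum_boole]
            rw [hcard]
            have hZc := Zcount d L k hd hL0 α M hα0 hM0 hLM hk x hMax z
            calc ((Finset.univ.filter
                (fun π : Fin k → Fin d → Fin L => z ∈ Zset d L k α x π)).card : ENNReal)
                = ENNReal.ofReal ((Finset.univ.filter
                    (fun π : Fin k → Fin d → Fin L => z ∈ Zset d L k α x π)).card : ℝ) := by
                  rw [ENNReal.ofReal_natCast]
              _ ≤ ENNReal.ofReal Nr := ENNReal.ofReal_le_ofReal hZc
          · rw [Set.indicator_of_notMem hz]
            apply le_of_eq
            apply Finset.sum_eq_zero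
            intro π _
            exact Set.indicator_of_notMem
              (fun hmem => hz (Zset_subset_unitCube d L k α x π hmem)) _
      _ = ENNReal.ofReal Nr := by
          rw [lintegral_indicator_const (measurableSet_unitCube d), volume_unitCube, mul_one]
  -- put everything together
  calc ∫⁻ ω, volume (Vset ω) ∂μ
      ≤ ∫⁻ ω, ∑ π : Fin k → Fin d → Fin L,
          Set.indicator {ω' : (Fin d → Fin L) → Bool | ∀ i, ω' (π i) = true}
            (fun _ => volume (Zset d L k α x π)) ω ∂μ := lintegral_mono hpoint
    _ = ∑ π : Fin k → Fin d → Fin L,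
          volume (Zset d L k α x π) * μ {ω' | ∀ i, ω' (π i) = true} := by
        rw [lintegral_finset_sum _ (fun π _ =>
          measurable_const.indicator (hcylmeas π))]
        exact Finset.sum_congr rfl fun π _ =>
          lintegral_indicator_const (hcylmeas π) _
    _ ≤ ∑ π : Fin k → Fin d → Fin L,
          volume (Zset d L k α x π) * (ENNReal.ofReal p) ^ k :=
        Finset.sum_le_sum fun π _ => hterm π
    _ = (ENNReal.ofReal p) ^ k * ∑ π : Fin k → Fin d → Fin L,
          volume (Zset d L k α x π) := by
        rw [← Finset.sum_mul, mul_comm]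
    _ ≤ (ENNReal.ofReal p) ^ k * ENNReal.ofReal Nr := by
        exact mul_le_mul_right hsumZ _
    _ = ENNReal.ofReal ((4/α + 13) ^ (d * d) * ((L:ℝ) * M * (k:ℝ)) ^ (d ^ 2) * p ^ k) := by
        rw [← ENNReal.ofReal_pow hp.le, ← ENNReal.ofReal_mul (by positivity)]
        congr 1
        rw [hNr, mul_pow, show d ^ 2 = d * d from sq d]
        ring
end

section
/- Let d ≥ 1 and let {x_m}_{m=1}^∞ be a sequence of nonzero vectors in ℝ^d with lim_{m→∞} ‖x_m‖ = 0. Suppose ρ ∈ (0,1) and k₀ ∈ ℕ are such that ‖x_{k+1}‖/‖x_k‖ > ρ for all k ≥ k₀. Then for every n ∈ ℕ there exists a finite subset F ⊆ {x_m : m ∈ ℕ} with exactly n+1 elements such that δ(F) ≥ ρ^{2n−1}(1−ρ). -/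
open MeasureTheory Filter Set

/-- If `‖x_m‖ → 0` and `‖x_{k+1}‖/‖x_k‖ > ρ` for all `k ≥ k₀`, then for every `n ≥ 1`
one can pick `n+1` points of the sequence forming a set `F` with
`δ(F) ≥ ρ^{2n−1}(1−ρ)`. -/
theorem stmt11 (d : ℕ) (hd : 1 ≤ d) (x : ℕ → EuclideanSpace ℝ (Fin d))
    (hne : ∀ m, x m ≠ 0)
    (hnorm : Tendsto (fun m => ‖x m‖) atTop (nhds 0))
    (ρ : ℝ) (hρ0 : 0 < ρ) (hρ1 : ρ < 1) (k₀ : ℕ)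
    (hratio : ∀ k, k₀ ≤ k → ρ < ‖x (k + 1)‖ / ‖x k‖) :
    ∀ n : ℕ, 1 ≤ n → ∃ F : Set (EuclideanSpace ℝ (Fin d)),
      F ⊆ Set.range x ∧ F.Finite ∧ F.ncard = n + 1 ∧
      ρ ^ (2 * n - 1) * (1 - ρ) ≤ delta F := by
  classical
  intro n hn
  have hnpos : ∀ m, (0:ℝ) < ‖x m‖ := fun m => norm_pos_iff.mpr (hne m)
  set R := ‖x k₀‖ with hRdef
  have hR : 0 < R := hnpos k₀
  -- the sequence of norms hits every interval (ρ t, t] with 0 < t ≤ R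
  have hit : ∀ t : ℝ, 0 < t → t ≤ R → ∃ k, ρ * t < ‖x k‖ ∧ ‖x k‖ ≤ t := by
    intro t ht htR
    have hex : ∃ k, k₀ ≤ k ∧ ‖x k‖ ≤ t := by
      have h1 : ∀ᶠ m in atTop, ‖x m‖ < t := hnorm.eventually (gt_mem_nhds ht)
      have h2 : ∀ᶠ m in atTop, k₀ ≤ m := eventually_ge_atTop k₀
      obtain ⟨m, hm1, hm2⟩ := (h1.and h2).exists
      exact ⟨m, hm2, hm1.le⟩
    obtain ⟨hk₀k, hkt⟩ := Nat.find_spec hex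
    rcases eq_or_lt_of_le hk₀k with heq | hlt
    · refine ⟨Nat.find hex, ?_, hkt⟩
      have h1 : t ≤ ‖x (Nat.find hex)‖ := by rw [← heq]; exact htR
      nlinarith
    · have hkpos : 0 < Nat.find hex := lt_of_le_of_lt (Nat.zero_le _) hlt
      have hk1 : k₀ ≤ Nat.find hex - 1 := Nat.le_sub_one_of_lt hlt
      have hmin := Nat.find_min hex (Nat.sub_lt hkpos one_pos)
      push_neg at hmin
      have hgt : t < ‖x (Nat.find hex - 1)‖ := hmin hk1
      have hr := hratio (Nat.find hex - 1) hk1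
      rw [lt_div_iff₀ (hnpos (Nat.find hex - 1))] at hr
      rw [Nat.sub_add_cancel hkpos] at hr
      refine ⟨Nat.find hex, ?_, hkt⟩
      calc ρ * t < ρ * ‖x (Nat.find hex - 1)‖ := by nlinarith
        _ < ‖x (Nat.find hex)‖ := by linarith
  -- choose points in geometric shells
  have hchoice : ∀ i : ℕ, ∃ k, ρ ^ (2 * i + 1) * R < ‖x k‖ ∧ ‖x k‖ ≤ ρ ^ (2 * i) * R := by
    intro i
    have hp1 : (0:ℝ) < ρ ^ (2 * i) * R := by positivity
    have hp2 : ρ ^ (2 * i) * R ≤ R := by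
      have := pow_le_one₀ (n := 2 * i) hρ0.le hρ1.le
      nlinarith
    obtain ⟨k, h1, h2⟩ := hit _ hp1 hp2
    refine ⟨k, ?_, h2⟩
    have : ρ ^ (2 * i + 1) * R = ρ * (ρ ^ (2 * i) * R) := by ring
    linarith [this ▸ h1]
  choose f hf1 hf2 using hchoice
  -- the chosen points, with strictly decreasing norms
  set g : Fin (n + 1) → EuclideanSpace ℝ (Fin d) := fun i => x (f i) with hgdef
  have hdec : ∀ i j : ℕ, i < j → ‖x (f j)‖ < ‖x (f i)‖ := by
    intro i j hij
    have h1 := hf1 i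
    have h2 := hf2 j
    have h3 : ρ ^ (2 * j) ≤ ρ ^ (2 * i + 2) :=
      pow_le_pow_of_le_one hρ0.le hρ1.le (by omega)
    have h4 : ρ ^ (2 * i + 2) < ρ ^ (2 * i + 1) :=
      pow_lt_pow_right_of_lt_one₀ hρ0 hρ1 (by omega)
    nlinarith
  have hginj : Function.Injective g := by
    intro i j hij
    by_contra hne'
    rcases lt_trichotomy (i : ℕ) (j : ℕ) with h | h | h
    · have := hdec i j h; rw [show x (f i) = x (f j) from hij] at this; exact lt_irrefl _ this
    · exact hne' (Fin.ext h)
    · have := hdec j i h; rw [show x (f i) = x (f j) from hij] at this; exact lt_irrefl _ this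
  refine ⟨Set.range g, ?_, Set.finite_range g, ?_, ?_⟩
  · rintro _ ⟨i, rfl⟩; exact ⟨f i, rfl⟩
  · rw [← Set.image_univ, Set.ncard_image_of_injective _ hginj, Set.ncard_univ,
      Nat.card_eq_fintype_card, Fintype.card_fin]
  · -- the delta bound
    set c : ℝ := ρ ^ (2 * n - 1) * (1 - ρ) with hcdef
    have hc0 : 0 ≤ c := by
      have : (0:ℝ) ≤ ρ ^ (2 * n - 1) := by positivity
      nlinarith
    have hdist : ∀ i j : Fin (n + 1), (i : ℕ) < (j : ℕ) → c * R ≤ ‖g i - g j‖ := by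
      intro i j hij
      have h1 := hf1 (i : ℕ)
      have h2 := hf2 (j : ℕ)
      have h3 : ρ ^ (2 * (j:ℕ)) ≤ ρ ^ (2 * (i:ℕ) + 2) :=
        pow_le_pow_of_le_one hρ0.le hρ1.le (by omega)
      have h4 : ρ ^ (2 * n - 1) ≤ ρ ^ (2 * (i:ℕ) + 1) :=
        pow_le_pow_of_le_one hρ0.le hρ1.le (by omega)
      have h5 : ρ ^ (2 * (i:ℕ) + 2) = ρ * ρ ^ (2 * (i:ℕ) + 1) := by ring
      have h6 : ‖g i‖ - ‖g j‖ ≤ ‖g i - g j‖ := norm_sub_norm_le _ _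
      have h7 : ‖g i‖ = ‖x (f (i:ℕ))‖ := rfl
      have h8 : ‖g j‖ = ‖x (f (j:ℕ))‖ := rfl
      rw [h7, h8] at h6
      have h9 : c * R ≤ ρ ^ (2 * (i:ℕ) + 1) * (1 - ρ) * R := by
        have := mul_le_mul_of_nonneg_right h4 (by nlinarith : (0:ℝ) ≤ (1 - ρ) * R)
        nlinarith
      have h10 : ρ ^ (2 * (j:ℕ)) * R ≤ ρ ^ (2 * (i:ℕ) + 2) * R :=
        mul_le_mul_of_nonneg_right h3 hR.le
      nlinarith
    set Dset := {s : ℝ | ∃ u ∈ Set.range g, ∃ v ∈ Set.range g, u ≠ v ∧ ‖u - v‖ = s} with hDdef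
    set Mset := {s : ℝ | ∃ z ∈ Set.range g, ‖z‖ = s} with hMdef
    have h01 : ((0 : Fin (n+1)) : ℕ) < ((1 : Fin (n+1)) : ℕ) := by
      simp [Fin.val_one', Nat.mod_eq_of_lt (show 1 < n + 1 by omega)]
    have hg01 : g 0 ≠ g 1 := fun h => by
      have := hginj h; rw [Fin.ext_iff] at this; omega
    have hDne : Dset.Nonempty :=
      ⟨‖g 0 - g 1‖, g 0, ⟨0, rfl⟩, g 1, ⟨1, rfl⟩, hg01, rfl⟩
    have hDlb : ∀ s ∈ Dset, c * R ≤ s := by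
      rintro s ⟨u, ⟨i, rfl⟩, v, ⟨j, rfl⟩, huv, rfl⟩
      rcases lt_trichotomy (i : ℕ) (j : ℕ) with h | h | h
      · exact hdist i j h
      · exact absurd (Fin.ext h) (fun hh => huv (congrArg g hh))
      · rw [norm_sub_rev]; exact hdist j i h
    have hD : c * R ≤ sInf Dset := le_csInf hDne hDlb
    have hMub : ∀ s ∈ Mset, s ≤ R := by
      rintro s ⟨z, ⟨i, rfl⟩, rfl⟩
      have h2 := hf2 (i : ℕ)
      have hle : ρ ^ (2 * (i:ℕ)) ≤ 1 := pow_le_one₀ hρ0.le hρ1.le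
      have : ‖g i‖ = ‖x (f (i:ℕ))‖ := rfl
      rw [this]; nlinarith
    have hMbdd : BddAbove Mset := ⟨R, hMub⟩
    have hMmem : ‖g 0‖ ∈ Mset := ⟨g 0, ⟨0, rfl⟩, rfl⟩
    have hMpos : 0 < sSup Mset :=
      lt_of_lt_of_le (hnpos (f ((0 : Fin (n+1)) : ℕ))) (le_csSup hMbdd hMmem)
    have hMle : sSup Mset ≤ R := Real.sSup_le hMub hR.le
    rw [delta, ← hDdef, ← hMdef, le_div_iff₀ hMpos]
    calc c * sSup Mset ≤ c * R := by nlinarith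
      _ ≤ sInf Dset := hD
end
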